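/- arXiv:1606.04771 — 11 statements merged into one kernel-verified Lean document; each statement's English description precedes it below -/
import Mathlib

section
/- Let b ∈ ℝ with b ≠ 0, c > 0, q > 0, x0 ≥ 0, and let r be a natural number. Assume either (b > 0 and r < b·q) or (b < 0 and r < -b). Then the r-th moment of the IF1 distribution, ∫_{x0}^∞ x^r · (|b|q/c) · ((x-x0)/c)^(b-1) · (1 + ((x-x0)/c)^b)^(-q-1) dx, equals Σ_{i=0}^{r} binomial(r,i) · x0^i · c^(r-i) · Γ(q - (r-i)/b) · Γ(1 + (r-i)/b) / Γ(q). -/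
/-!
Substituting `x = x0 + c t` and expanding `x ^ r` binomially reduces the moment to the
integrals `∫₀^∞ t ^ k f(t) dt`, `k ≤ r`, against the standardized density `f`
(`x0 = 0`, `c = 1`). The substitution `u = t ^ b` turns each of them into the beta-prime
integral `q ∫₀^∞ u ^ (k/b) (1 + u) ^ (-q-1) du = q B(1 + k/b, q - k/b)`, and `u = y / (1 - y)`
turns that into Euler's Beta integral over `(0, 1)`. The hypotheses on `r` give
`-1 < k/b < q` for all `k ≤ r`, the convergence conditions of these Beta integrals.
-/

open MeasureTheory Real Set

section Beta

variable {s t : ℝ}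

lemma ofReal_rpow_mul_one_sub_rpow {y : ℝ} (hy : y ∈ Ioo (0 : ℝ) 1) :
    ((y ^ (s - 1) * (1 - y) ^ (t - 1) : ℝ) : ℂ) =
      (y : ℂ) ^ ((s : ℂ) - 1) * (1 - (y : ℂ)) ^ ((t : ℂ) - 1) := by
  rw [Complex.ofReal_mul, Complex.ofReal_cpow hy.1.le, Complex.ofReal_cpow (by linarith [hy.2])]
  push_cast
  rfl

lemma integrableOn_Ioo_cpow_mul_one_sub_cpow (hs : 0 < s) (ht : 0 < t) :
    IntegrableOn (fun y : ℝ => (y : ℂ) ^ ((s : ℂ) - 1) * (1 - (y : ℂ)) ^ ((t : ℂ) - 1))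
      (Ioo 0 1) :=
  ((intervalIntegrable_iff_integrableOn_Ioc_of_le zero_le_one).mp
    (Complex.betaIntegral_convergent (by simpa) (by simpa))).mono_set Ioo_subset_Ioc_self

lemma integrableOn_Ioo_rpow_mul_one_sub_rpow (hs : 0 < s) (ht : 0 < t) :
    IntegrableOn (fun y : ℝ => y ^ (s - 1) * (1 - y) ^ (t - 1)) (Ioo 0 1) :=
  IntegrableOn.congr_fun (integrableOn_Ioo_cpow_mul_one_sub_cpow hs ht).re
    (fun y hy => by
      rw [← ofReal_rpow_mul_one_sub_rpow hy, RCLike.re_to_complex, Complex.ofReal_re])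
    measurableSet_Ioo

lemma integral_Ioo_rpow_mul_one_sub_rpow (hs : 0 < s) (ht : 0 < t) :
    ∫ y in Ioo (0 : ℝ) 1, y ^ (s - 1) * (1 - y) ^ (t - 1) =
      Gamma s * Gamma t / Gamma (s + t) := by
  change _ = ProbabilityTheory.beta s t
  rw [ProbabilityTheory.beta_eq_betaIntegralReal s t hs ht, Complex.betaIntegral,
    intervalIntegral.integral_of_le zero_le_one, integral_Ioc_eq_integral_Ioo,
    ← RCLike.re_to_complex, ← integral_re (integrableOn_Ioo_cpow_mul_one_sub_cpow hs ht)]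
  refine setIntegral_congr_fun measurableSet_Ioo fun y hy => ?_
  rw [← ofReal_rpow_mul_one_sub_rpow hy, RCLike.re_to_complex, Complex.ofReal_re]

lemma hasDerivAt_div_one_sub {y : ℝ} (hy : y ≠ 1) :
    HasDerivAt (fun y : ℝ => y / (1 - y)) ((1 - y) ^ 2)⁻¹ y := by
  have h : HasDerivAt (fun y : ℝ => y / (1 - y))
      ((1 * (1 - y) - y * (0 - 1)) / (1 - y) ^ 2) y :=
    (hasDerivAt_id y).div ((hasDerivAt_const y 1).sub (hasDerivAt_id y)) (sub_ne_zero.mpr hy.symm)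
  exact h.congr_deriv (by ring)

lemma injOn_div_one_sub : InjOn (fun y : ℝ => y / (1 - y)) (Ioo 0 1) := by
  intro a ha b hb hab
  have : (1 : ℝ) - a ≠ 0 := by linarith [ha.2]
  have : (1 : ℝ) - b ≠ 0 := by linarith [hb.2]
  field_simp at hab
  linarith

lemma image_div_one_sub_Ioo : (fun y : ℝ => y / (1 - y)) '' Ioo 0 1 = Ioi 0 := by
  ext u
  constructor
  · rintro ⟨y, ⟨hy0, hy1⟩, rfl⟩
    exact div_pos hy0 (by linarith)
  · intro (hu : 0 < u)
    refine ⟨u / (1 + u),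
      ⟨by positivity, (div_lt_one (by positivity)).mpr (by linarith)⟩, ?_⟩
    have : (1 : ℝ) + u ≠ 0 := by positivity
    field_simp
    ring

lemma abs_deriv_smul_div_one_sub {y : ℝ} (hy : y ∈ Ioo (0 : ℝ) 1) :
    |((1 - y) ^ 2)⁻¹| • ((y / (1 - y)) ^ (s - 1) * (1 + y / (1 - y)) ^ (-(s + t))) =
      y ^ (s - 1) * (1 - y) ^ (t - 1) := by
  have ha : 0 < 1 - y := by linarith [hy.2]
  have h1 : 1 + y / (1 - y) = (1 - y)⁻¹ := by field_simp; ring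
  have h2 : (1 - y) ^ (t - 1) = (1 - y) ^ (s + t) / (1 - y) ^ (s - 1) / (1 - y) ^ (2 : ℝ) := by
    rw [← rpow_sub ha, ← rpow_sub ha]
    ring_nf
  rw [h1, h2, smul_eq_mul, abs_of_pos (by positivity), div_rpow hy.1.le ha.le, inv_rpow ha.le,
    rpow_neg ha.le, inv_inv, rpow_two]
  ring

lemma integrableOn_Ioi_rpow_mul_one_add_rpow (hs : 0 < s) (ht : 0 < t) :
    IntegrableOn (fun u : ℝ => u ^ (s - 1) * (1 + u) ^ (-(s + t))) (Ioi 0) := by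
  rw [← image_div_one_sub_Ioo, integrableOn_image_iff_integrableOn_abs_deriv_smul
    measurableSet_Ioo (fun y hy => (hasDerivAt_div_one_sub hy.2.ne).hasDerivWithinAt)
    injOn_div_one_sub]
  exact (integrableOn_Ioo_rpow_mul_one_sub_rpow hs ht).congr_fun
    (fun y hy => (abs_deriv_smul_div_one_sub hy).symm) measurableSet_Ioo

lemma integral_Ioi_rpow_mul_one_add_rpow (hs : 0 < s) (ht : 0 < t) :
    ∫ u in Ioi (0 : ℝ), u ^ (s - 1) * (1 + u) ^ (-(s + t)) =
      Gamma s * Gamma t / Gamma (s + t) := by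
  rw [← image_div_one_sub_Ioo, integral_image_eq_integral_abs_deriv_smul
    measurableSet_Ioo (fun y hy => (hasDerivAt_div_one_sub hy.2.ne).hasDerivWithinAt)
    injOn_div_one_sub, setIntegral_congr_fun measurableSet_Ioo
    (fun y hy => abs_deriv_smul_div_one_sub hy), integral_Ioo_rpow_mul_one_sub_rpow hs ht]

end Beta

lemma integrableOn_Ioi_rpow_mul_one_add_rpow_neg_sub_one {a q : ℝ} (ha : -1 < a)
    (haq : a < q) :
    IntegrableOn (fun u : ℝ => u ^ a * (1 + u) ^ (-q - 1)) (Ioi 0) := by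
  have h := integrableOn_Ioi_rpow_mul_one_add_rpow (s := 1 + a) (t := q - a)
    (by linarith) (by linarith)
  rwa [add_sub_cancel_left, show 1 + a + (q - a) = q + 1 by ring, neg_add'] at h

lemma integral_Ioi_rpow_mul_one_add_rpow_neg_sub_one {a q : ℝ} (ha : -1 < a)
    (haq : a < q) :
    ∫ u in Ioi (0 : ℝ), u ^ a * (1 + u) ^ (-q - 1) =
      Gamma (1 + a) * Gamma (q - a) / Gamma (q + 1) := by
  have h := integral_Ioi_rpow_mul_one_add_rpow (s := 1 + a) (t := q - a)
    (by linarith) (by linarith)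
  rwa [add_sub_cancel_left, show 1 + a + (q - a) = q + 1 by ring, neg_add'] at h

noncomputable def if1StdPDF (b q t : ℝ) : ℝ := |b| * q * t ^ (b - 1) * (1 + t ^ b) ^ (-q - 1)

section IF1

variable {b q k : ℝ}

lemma abs_deriv_smul_comp_rpow_eq_rpow_mul_if1StdPDF (hb : b ≠ 0) {t : ℝ} (ht : 0 < t) :
    (|b| * t ^ (b - 1)) • (q * ((t ^ b) ^ (k / b) * (1 + t ^ b) ^ (-q - 1))) =
      t ^ k * if1StdPDF b q t := by
  rw [← rpow_mul ht.le, mul_div_cancel₀ k hb, smul_eq_mul, if1StdPDF]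
  ring

lemma integrableOn_Ioi_rpow_mul_if1StdPDF (hb : b ≠ 0) (h1 : -1 < k / b) (h2 : k / b < q) :
    IntegrableOn (fun t => t ^ k * if1StdPDF b q t) (Ioi 0) :=
  ((integrableOn_Ioi_comp_rpow_iff _ hb).mpr
    ((integrableOn_Ioi_rpow_mul_one_add_rpow_neg_sub_one h1 h2).const_mul q)).congr_fun
    (fun _ ht => abs_deriv_smul_comp_rpow_eq_rpow_mul_if1StdPDF hb ht) measurableSet_Ioi

lemma integral_Ioi_rpow_mul_if1StdPDF (hb : b ≠ 0) (hq : q ≠ 0) (h1 : -1 < k / b)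
    (h2 : k / b < q) :
    ∫ t in Ioi 0, t ^ k * if1StdPDF b q t =
      Gamma (q - k / b) * Gamma (1 + k / b) / Gamma q := by
  rw [← setIntegral_congr_fun measurableSet_Ioi
      (fun t ht => abs_deriv_smul_comp_rpow_eq_rpow_mul_if1StdPDF hb ht),
    integral_comp_rpow_Ioi (fun u => q * (u ^ (k / b) * (1 + u) ^ (-q - 1))) hb,
    integral_const_mul, integral_Ioi_rpow_mul_one_add_rpow_neg_sub_one h1 h2,
    Gamma_add_one hq]
  field_simp

end IF1

lemma integral_Ioi_eq_smul_integral_Ioi_comp_add_mul {E : Type*} [NormedAddCommGroup E]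
    [NormedSpace ℝ E] (F : ℝ → E) (x₀ : ℝ) {c : ℝ} (hc : 0 < c) :
    ∫ x in Ioi x₀, F x = c • ∫ t in Ioi 0, F (x₀ + c * t) := by
  rw [integral_comp_mul_left_Ioi' (fun y => F (x₀ + y)) 0 hc, mul_zero,
    ← (measurePreserving_add_left volume x₀).setIntegral_preimage_emb
      (measurableEmbedding_addLeft x₀), preimage_const_add_Ioi, sub_self]

lemma integral_Ioi_pow_mul_comp_affine (f : ℝ → ℝ) (x₀ : ℝ) {c : ℝ} (hc : 0 < c)
    (r : ℕ)
    (hf : ∀ k ≤ r, IntegrableOn (fun t => t ^ k * f t) (Ioi 0)) :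
    ∫ x in Ioi x₀, x ^ r * (f ((x - x₀) / c) / c) =
      ∑ i ∈ Finset.range (r + 1),
        r.choose i * x₀ ^ i * c ^ (r - i) * ∫ t in Ioi 0, t ^ (r - i) * f t := by
  have hexpand : ∀ t, c * ((x₀ + c * t) ^ r * (f ((x₀ + c * t - x₀) / c) / c)) =
      ∑ i ∈ Finset.range (r + 1),
        r.choose i * x₀ ^ i * c ^ (r - i) * (t ^ (r - i) * f t) := by
    intro t
    rw [add_sub_cancel_left, mul_div_cancel_left₀ t hc.ne', add_pow, Finset.sum_mul,
      Finset.mul_sum]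
    refine Finset.sum_congr rfl fun i _ => ?_
    field_simp
    ring
  rw [integral_Ioi_eq_smul_integral_Ioi_comp_add_mul _ x₀ hc, smul_eq_mul,
    ← integral_const_mul, funext hexpand, integral_finsetSum]
  · simp only [integral_const_mul]
  · intro i hi
    exact (hf (r - i) (Nat.sub_le r i)).const_mul _

lemma if1_exponent_bounds {b q : ℝ} {r k : ℕ} (hq : 0 < q)
    (hcond : (0 < b ∧ (r : ℝ) < b * q) ∨ (b < 0 ∧ (r : ℝ) < -b)) (hk : k ≤ r) :
    -1 < (k : ℝ) / b ∧ (k : ℝ) / b < q := by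
  have hkr : (k : ℝ) ≤ r := by exact_mod_cast hk
  have hk0 : (0 : ℝ) ≤ k := k.cast_nonneg
  rcases hcond with ⟨hb, hrq⟩ | ⟨hb, hrb⟩
  · exact ⟨by linarith [div_nonneg hk0 hb.le], (div_lt_iff₀ hb).mpr (by linarith)⟩
  · exact ⟨(lt_div_iff_of_neg hb).mpr (by linarith),
      by linarith [div_nonpos_of_nonneg_of_nonpos hk0 hb.le]⟩

theorem if1_moment_general (b c q x0 : ℝ) (r : ℕ) (hb : b ≠ 0) (hc : 0 < c) (hq : 0 < q)
    (hcond : (0 < b ∧ (r : ℝ) < b * q) ∨ (b < 0 ∧ (r : ℝ) < -b)) :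
    ∫ x in Set.Ioi x0,
        x ^ r * (|b| * q / c * ((x - x0) / c) ^ (b - 1) *
          (1 + ((x - x0) / c) ^ b) ^ (-q - 1)) =
      ∑ i ∈ Finset.range (r + 1),
        (r.choose i : ℝ) * x0 ^ i * c ^ (r - i) *
          (Real.Gamma (q - ((r : ℝ) - i) / b) * Real.Gamma (1 + ((r : ℝ) - i) / b) /
            Real.Gamma q) := by
  have hbounds (k : ℕ) (hk : k ≤ r) := if1_exponent_bounds hq hcond hk
  calc _ = ∫ x in Ioi x0, x ^ r * (if1StdPDF b q ((x - x0) / c) / c) := by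
        congr 1 with x
        rw [if1StdPDF]
        ring
    _ = _ := integral_Ioi_pow_mul_comp_affine _ x0 hc r fun k hk => by
        simpa only [rpow_natCast] using
          integrableOn_Ioi_rpow_mul_if1StdPDF hb (hbounds k hk).1 (hbounds k hk).2
    _ = _ := Finset.sum_congr rfl fun i hi => by
        have hir : i ≤ r := Nat.lt_succ_iff.mp (Finset.mem_range.mp hi)
        obtain ⟨h1, h2⟩ := hbounds (r - i) (Nat.sub_le r i)
        rw [← Nat.cast_sub hir, ← integral_Ioi_rpow_mul_if1StdPDF hb hq.ne' h1 h2]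
        simp only [rpow_natCast]

/-- The `r`-th moment of the IF1 distribution. -/
theorem if1_moment (b c q x0 : ℝ) (r : ℕ) (hb : b ≠ 0) (hc : 0 < c) (hq : 0 < q)
    (hx0 : 0 ≤ x0)
    (hcond : (0 < b ∧ (r : ℝ) < b * q) ∨ (b < 0 ∧ (r : ℝ) < -b)) :
    ∫ x in Set.Ioi x0,
        x ^ r * (|b| * q / c * ((x - x0) / c) ^ (b - 1) *
          (1 + ((x - x0) / c) ^ b) ^ (-q - 1)) =
      ∑ i ∈ Finset.range (r + 1),
        (r.choose i : ℝ) * x0 ^ i * c ^ (r - i) *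
          (Real.Gamma (q - ((r : ℝ) - i) / b) * Real.Gamma (1 + ((r : ℝ) - i) / b) /
            Real.Gamma q) :=
  if1_moment_general b c q x0 r hb hc hq hcond
end

section
/- Let b ∈ ℝ with b ≠ 0, c > 0, q > 0, x0 ≥ 0, and let r be a natural number. Assume either (b > 0 and r < b·q) or b < 0. Then the r-th moment of the IF2 distribution, ∫_{x0}^∞ x^r · (|b|q/c) · ((x-x0)/c)^(-b·q-1) · exp(-((x-x0)/c)^(-b·q)) dx, equals Σ_{i=0}^{r} binomial(r,i) · x0^i · c^(r-i) · Γ(1 - (r-i)/(b·q)). -/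
/-!
After the affine substitution `x = c t + x0` the IF2 density becomes the standard density
`|p| t^(-p-1) exp(-t^(-p))` with `p = b q`, and the substitution `u = t^(-p)` turns its real
moment of order `k` into `Γ(1 - k/p)`, which is finite as long as `k < p` or `p < 0`.
Expanding `(c t + x0)^r` by the binomial theorem gives the sum.
-/

open MeasureTheory Real Set

noncomputable def if2StandardDensity (p t : ℝ) : ℝ :=
  |p| * t ^ (-p - 1) * exp (-t ^ (-p))

lemma rpow_mul_if2StandardDensity_eq {p k t : ℝ} (hp : p ≠ 0) (ht : 0 < t) :
    t ^ k * if2StandardDensity p t =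
      (|-p| * t ^ (-p - 1)) • (exp (-t ^ (-p)) * (t ^ (-p)) ^ (1 - k / p - 1)) := by
  have hk : -p * (1 - k / p - 1) = k := by field_simp; ring
  rw [smul_eq_mul, ← rpow_mul ht.le, hk, abs_neg, if2StandardDensity]
  ring

lemma integrableOn_rpow_mul_if2StandardDensity {p k : ℝ} (hp : p ≠ 0) (hk : 0 < 1 - k / p) :
    IntegrableOn (fun t ↦ t ^ k * if2StandardDensity p t) (Ioi 0) := by
  refine ((integrableOn_Ioi_comp_rpow_iff _ (neg_ne_zero.mpr hp)).mpr
    (GammaIntegral_convergent hk)).congr_fun (fun t ht ↦ ?_) measurableSet_Ioi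
  exact (rpow_mul_if2StandardDensity_eq hp ht).symm

lemma integral_rpow_mul_if2StandardDensity {p k : ℝ} (hp : p ≠ 0) (hk : 0 < 1 - k / p) :
    ∫ t in Ioi 0, t ^ k * if2StandardDensity p t = Gamma (1 - k / p) := by
  rw [Gamma_eq_integral hk,
    ← integral_comp_rpow_Ioi (fun u ↦ exp (-u) * u ^ (1 - k / p - 1)) (neg_ne_zero.mpr hp)]
  exact setIntegral_congr_fun measurableSet_Ioi fun t ht ↦ rpow_mul_if2StandardDensity_eq hp ht

lemma one_sub_div_pos_of_le {p k : ℝ} {r : ℕ} (hp : (0 < p ∧ (r : ℝ) < p) ∨ p < 0)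
    (hk₀ : 0 ≤ k) (hkr : k ≤ r) : 0 < 1 - k / p := by
  rcases hp with ⟨hp, hrp⟩ | hp
  · linarith [(div_lt_one hp).mpr (hkr.trans_lt hrp)]
  · linarith [div_nonpos_of_nonneg_of_nonpos hk₀ hp.le]

lemma integral_add_pow_mul_if2StandardDensity {p : ℝ} {r : ℕ}
    (hp : (0 < p ∧ (r : ℝ) < p) ∨ p < 0) (c x0 : ℝ) :
    ∫ t in Ioi 0, (c * t + x0) ^ r * if2StandardDensity p t =
      ∑ i ∈ Finset.range (r + 1),
        (r.choose i : ℝ) * x0 ^ i * c ^ (r - i) * Gamma (1 - ((r : ℝ) - i) / p) := by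
  have hp₀ : p ≠ 0 := hp.elim (fun h ↦ h.1.ne') ne_of_lt
  have hk : ∀ i ∈ Finset.range (r + 1), 0 < 1 - ((r - i : ℕ) : ℝ) / p := fun i _ ↦
    one_sub_div_pos_of_le hp (Nat.cast_nonneg _) (Nat.cast_le.mpr (Nat.sub_le r i))
  have hexpand : ∀ t ∈ Ioi (0 : ℝ), (c * t + x0) ^ r * if2StandardDensity p t =
      ∑ i ∈ Finset.range (r + 1), (r.choose i : ℝ) * x0 ^ i * c ^ (r - i) *
        (t ^ ((r - i : ℕ) : ℝ) * if2StandardDensity p t) := fun t _ ↦ by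
    rw [add_comm, add_pow, Finset.sum_mul]
    refine Finset.sum_congr rfl fun i _ ↦ ?_
    rw [rpow_natCast, mul_pow]
    ring
  rw [setIntegral_congr_fun measurableSet_Ioi hexpand,
    integral_finsetSum _ fun i hi ↦
      (integrableOn_rpow_mul_if2StandardDensity hp₀ (hk i hi)).const_mul _]
  refine Finset.sum_congr rfl fun i hi ↦ ?_
  rw [integral_const_mul, integral_rpow_mul_if2StandardDensity hp₀ (hk i hi),
    Nat.cast_sub (Finset.mem_range_succ_iff.mp hi)]

lemma integral_Ioi_eq_mul_integral_Ioi_comp_affine (f : ℝ → ℝ) (x0 : ℝ) {c : ℝ} (hc : 0 < c) :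
    ∫ x in Ioi x0, f x = c * ∫ t in Ioi 0, f (c * t + x0) := by
  have hshift := (measurePreserving_add_right volume x0).setIntegral_preimage_emb
    (measurableEmbedding_addRight x0) f (Ioi x0)
  rw [preimage_add_const_Ioi, sub_self] at hshift
  rw [← hshift, ← smul_eq_mul, integral_comp_mul_left_Ioi' (fun y ↦ f (y + x0)) 0 hc, mul_zero]

theorem if2_moment_general (b c q x0 : ℝ) (r : ℕ) (hc : 0 < c) (hq : 0 < q)
    (hcond : (0 < b ∧ (r : ℝ) < b * q) ∨ b < 0) :
    ∫ x in Set.Ioi x0,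
        x ^ r * (|b| * q / c * ((x - x0) / c) ^ (-(b * q) - 1) *
          Real.exp (-((x - x0) / c) ^ (-(b * q)))) =
      ∑ i ∈ Finset.range (r + 1),
        (r.choose i : ℝ) * x0 ^ i * c ^ (r - i) *
          Real.Gamma (1 - ((r : ℝ) - i) / (b * q)) := by
  have hp : (0 < b * q ∧ (r : ℝ) < b * q) ∨ b * q < 0 :=
    hcond.imp (And.imp_left (mul_pos · hq)) (mul_neg_of_neg_of_pos · hq)
  have hdensity : ∀ t, |b| * q / c * ((c * t + x0 - x0) / c) ^ (-(b * q) - 1) *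
      exp (-((c * t + x0 - x0) / c) ^ (-(b * q))) = c⁻¹ * if2StandardDensity (b * q) t := by
    intro t
    rw [add_sub_cancel_right, mul_div_cancel_left₀ _ hc.ne', if2StandardDensity, abs_mul,
      abs_of_pos hq]
    ring
  simp_rw [integral_Ioi_eq_mul_integral_Ioi_comp_affine _ x0 hc, hdensity, mul_left_comm _ c⁻¹,
    integral_const_mul, mul_inv_cancel_left₀ hc.ne']
  exact integral_add_pow_mul_if2StandardDensity hp c x0

/-- The `r`-th moment of the IF2 distribution. -/
theorem if2_moment (b c q x0 : ℝ) (r : ℕ) (hb : b ≠ 0) (hc : 0 < c) (hq : 0 < q)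
    (hx0 : 0 ≤ x0)
    (hcond : (0 < b ∧ (r : ℝ) < b * q) ∨ b < 0) :
    ∫ x in Set.Ioi x0,
        x ^ r * (|b| * q / c * ((x - x0) / c) ^ (-(b * q) - 1) *
          Real.exp (-((x - x0) / c) ^ (-(b * q)))) =
      ∑ i ∈ Finset.range (r + 1),
        (r.choose i : ℝ) * x0 ^ i * c ^ (r - i) *
          Real.Gamma (1 - ((r : ℝ) - i) / (b * q)) :=
  if2_moment_general b c q x0 r hc hq hcond
end

section
/- Let p ≥ 0 be a real number, c > 0, q > 0, x0 ≥ 0, and let r be a natural number with r < q. Then the r-th moment of the IF3 distribution, ∫_{x0}^∞ x^r · (q/c) · ((p+1)^(-1/q) + (x-x0)/c)^(-q-1) · (1 - (1 + (p+1)^(1/q)·(x-x0)/c)^(-q))^p dx, equals Σ_{i=0}^{r} binomial(r,i) · x0^i · c^(r-i) · (p+1)^(1-(r-i)/q) · Σ_{k=0}^{r-i} binomial(r-i,k) · (-1)^k · B(1 - (r-i-k)/q, p+1), where B(a,b) = Γ(a)Γ(b)/Γ(a+b). -/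
/-!
The substitution `u = (1 + (p+1)^(1/q) (x - x0)/c)^(-q)` maps `(x0, ∞)` onto `(0, 1)` and turns
the IF3 density into the `Beta(1, p+1)` density `(p+1)(1-u)^p`; inversely
`x = x0 + c (p+1)^(-1/q) (u^(-1/q) - 1)`. Expanding `x^r` binomially, first in `x0` and then in
`u^(-1/q)`, writes the moment as a finite combination of integrals
`∫₀¹ u^(a-1) (1-u)^p du = B(a, p+1)` with `a = 1 - m/q`, which converge because `m ≤ r < q`.
-/

open MeasureTheory Real

/-- The Beta function expressed via the Gamma function. -/
noncomputable def betaFn (a b : ℝ) : ℝ := Real.Gamma a * Real.Gamma b / Real.Gamma (a + b)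

open Set Finset

theorem integral_Ioo_rpow_mul_one_sub_rpow_s2 {a b : ℝ} (ha : 0 < a) (hb : 0 < b) :
    ∫ u in Ioo (0 : ℝ) 1, u ^ (a - 1) * (1 - u) ^ (b - 1) = betaFn a b := by
  have hre : Complex.betaIntegral a b =
      ↑(∫ u in (0 : ℝ)..1, u ^ (a - 1) * (1 - u) ^ (b - 1)) := by
    rw [Complex.betaIntegral, ← intervalIntegral.integral_ofReal]
    refine intervalIntegral.integral_congr fun u hu => ?_
    rw [Set.uIcc_of_le zero_le_one] at hu
    simp only [Complex.ofReal_mul, Complex.ofReal_cpow hu.1,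
      Complex.ofReal_cpow (sub_nonneg.2 hu.2)]
    push_cast
    rfl
  have := ProbabilityTheory.beta_eq_betaIntegralReal a b ha hb
  rw [hre, Complex.ofReal_re, intervalIntegral.integral_of_le zero_le_one,
    integral_Ioc_eq_integral_Ioo] at this
  exact this.symm

theorem integrableOn_rpow_mul_one_sub_rpow {a b : ℝ} (ha : 0 < a) (hb : 0 < b) :
    IntegrableOn (fun u : ℝ => u ^ (a - 1) * (1 - u) ^ (b - 1)) (Ioo 0 1) :=
  .of_integral_ne_zero <| by
    rw [integral_Ioo_rpow_mul_one_sub_rpow_s2 ha hb]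
    exact (ProbabilityTheory.beta_pos ha hb).ne'

theorem rpow_neg_inv_sub_one_pow {u : ℝ} (hu : 0 < u) (q : ℝ) (m : ℕ) :
    (u ^ (-1 / q) - 1) ^ m =
      ∑ k ∈ range (m + 1),
        (m.choose k : ℝ) * (-1) ^ k * u ^ ((1 - ((m : ℝ) - k) / q) - 1) := by
  rw [sub_eq_neg_add, add_pow]
  refine sum_congr rfl fun k hk => ?_
  have hkm : k ≤ m := Nat.lt_succ_iff.mp (mem_range.mp hk)
  rw [← rpow_natCast (u ^ (-1 / q)), ← rpow_mul hu.le, Nat.cast_sub hkm]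
  ring_nf

theorem rpow_neg_inv_sub_one_pow_mul_eq_sum {u : ℝ} (hu : 0 < u) (q p : ℝ) (m : ℕ) :
    (u ^ (-1 / q) - 1) ^ m * (1 - u) ^ p =
      ∑ k ∈ range (m + 1), (m.choose k : ℝ) * (-1) ^ k *
        (u ^ ((1 - ((m : ℝ) - k) / q) - 1) * (1 - u) ^ ((p + 1) - 1)) := by
  rw [rpow_neg_inv_sub_one_pow hu, sum_mul, add_sub_cancel_right]
  simp only [mul_assoc]

theorem one_sub_natCast_sub_div_pos {q : ℝ} {m : ℕ} (hq : 0 < q) (hm : (m : ℝ) < q)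
    {k : ℕ} :
    0 < 1 - ((m : ℝ) - k) / q := by
  rw [sub_pos, div_lt_one hq]
  linarith [k.cast_nonneg (α := ℝ)]

theorem integrableOn_rpow_neg_inv_sub_one_pow_mul {p q : ℝ} {m : ℕ} (hp : -1 < p) (hq : 0 < q)
    (hm : (m : ℝ) < q) :
    IntegrableOn (fun u : ℝ => (u ^ (-1 / q) - 1) ^ m * (1 - u) ^ p) (Ioo 0 1) := by
  refine IntegrableOn.congr_fun ?_
    (fun u hu => (rpow_neg_inv_sub_one_pow_mul_eq_sum hu.1 q p m).symm) measurableSet_Ioo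
  exact integrable_finsetSum _ fun k _ => (integrableOn_rpow_mul_one_sub_rpow
    (one_sub_natCast_sub_div_pos hq hm) (neg_lt_iff_pos_add.mp hp)).const_mul _

theorem integral_rpow_neg_inv_sub_one_pow_mul {p q : ℝ} {m : ℕ} (hp : -1 < p) (hq : 0 < q)
    (hm : (m : ℝ) < q) :
    ∫ u in Ioo 0 1, (u ^ (-1 / q) - 1) ^ m * (1 - u) ^ p =
      ∑ k ∈ range (m + 1),
        (m.choose k : ℝ) * (-1) ^ k * betaFn (1 - ((m : ℝ) - k) / q) (p + 1) := by
  have hp1 : 0 < p + 1 := neg_lt_iff_pos_add.mp hp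
  rw [setIntegral_congr_fun measurableSet_Ioo
    (fun u hu => rpow_neg_inv_sub_one_pow_mul_eq_sum hu.1 q p m),
    integral_finsetSum _ fun k _ =>
      (integrableOn_rpow_mul_one_sub_rpow (one_sub_natCast_sub_div_pos hq hm) hp1).const_mul _]
  refine sum_congr rfl fun k _ => ?_
  rw [integral_const_mul,
    integral_Ioo_rpow_mul_one_sub_rpow_s2 (one_sub_natCast_sub_div_pos hq hm) hp1]

theorem integral_add_mul_rpow_neg_inv_sub_one_pow_mul {p q : ℝ} {r : ℕ} (hp : -1 < p)
    (hq : 0 < q) (hr : (r : ℝ) < q) (x0 s : ℝ) :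
    ∫ u in Ioo 0 1, (x0 + s * (u ^ (-1 / q) - 1)) ^ r * (1 - u) ^ p =
      ∑ i ∈ range (r + 1), (r.choose i : ℝ) * x0 ^ i * s ^ (r - i) *
        ∑ k ∈ range (r - i + 1), ((r - i).choose k : ℝ) * (-1) ^ k *
          betaFn (1 - (((r - i : ℕ) : ℝ) - k) / q) (p + 1) := by
  have hexpand : ∀ u : ℝ, (x0 + s * (u ^ (-1 / q) - 1)) ^ r * (1 - u) ^ p =
      ∑ i ∈ range (r + 1), (r.choose i : ℝ) * x0 ^ i * s ^ (r - i) *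
        ((u ^ (-1 / q) - 1) ^ (r - i) * (1 - u) ^ p) := fun u => by
    rw [add_pow, sum_mul]
    refine sum_congr rfl fun i _ => ?_
    rw [mul_pow]
    ring
  have hri : ∀ i : ℕ, ((r - i : ℕ) : ℝ) < q := fun i =>
    (Nat.cast_le.mpr (r.sub_le i)).trans_lt hr
  simp_rw [hexpand]
  rw [integral_finsetSum _ fun i _ =>
    (integrableOn_rpow_neg_inv_sub_one_pow_mul hp hq (hri i)).const_mul _]
  refine sum_congr rfl fun i _ => ?_
  rw [integral_const_mul, integral_rpow_neg_inv_sub_one_pow_mul hp hq (hri i)]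

noncomputable def if3Density (p c q x0 x : ℝ) : ℝ :=
  q / c * ((p + 1) ^ (-1 / q) + (x - x0) / c) ^ (-q - 1) *
    (1 - (1 + (p + 1) ^ (1 / q) * ((x - x0) / c)) ^ (-q)) ^ p

noncomputable def if3Transform (p c q x0 u : ℝ) : ℝ :=
  x0 + c * (p + 1) ^ (-1 / q) * (u ^ (-1 / q) - 1)

theorem hasDerivAt_if3Transform (p c q x0 : ℝ) {u : ℝ} (hu : 0 < u) :
    HasDerivAt (if3Transform p c q x0)
      (c * (p + 1) ^ (-1 / q) * (-1 / q * u ^ (-1 / q - 1))) u :=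
  (((hasDerivAt_rpow_const (Or.inl hu.ne')).sub_const 1).const_mul _).const_add x0

theorem strictAntiOn_if3Transform {p c q : ℝ} (hp : -1 < p) (hc : 0 < c) (hq : 0 < q) (x0 : ℝ) :
    StrictAntiOn (if3Transform p c q x0) (Ioi 0) := fun u hu w _ huw => by
  have hscale : 0 < c * (p + 1) ^ (-1 / q) := mul_pos hc (rpow_pos_of_pos (by linarith) _)
  have : w ^ (-1 / q) < u ^ (-1 / q) :=
    rpow_lt_rpow_of_neg hu huw (by simpa [neg_div] using hq)
  unfold if3Transform
  nlinarith

theorem if3Transform_image_Ioo {p c q : ℝ} (hp : -1 < p) (hc : 0 < c) (hq : 0 < q) (x0 : ℝ) :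
    if3Transform p c q x0 '' Ioo 0 1 = Ioi x0 := by
  have hscale : 0 < c * (p + 1) ^ (-1 / q) := mul_pos hc (rpow_pos_of_pos (by linarith) _)
  have hexp : -1 / q < 0 := by simpa [neg_div] using hq
  ext x
  constructor
  · rintro ⟨u, ⟨hu0, hu1⟩, rfl⟩
    have := one_lt_rpow_of_pos_of_lt_one_of_neg hu0 hu1 hexp
    unfold if3Transform
    exact lt_add_of_pos_right x0 (mul_pos hscale (by linarith))
  · intro hx
    set w := 1 + (x - x0) / (c * (p + 1) ^ (-1 / q))
    have hw : 1 < w := lt_add_of_pos_right 1 (div_pos (sub_pos.mpr hx) hscale)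
    refine ⟨w ^ (-q),
      ⟨rpow_pos_of_pos (by linarith) _, rpow_lt_one_of_one_lt_of_neg hw (by linarith)⟩, ?_⟩
    rw [if3Transform, ← rpow_mul (by linarith), show -q * (-1 / q) = 1 by field_simp, rpow_one,
      add_sub_cancel_left, mul_div_cancel₀ _ hscale.ne', add_sub_cancel]

theorem abs_deriv_mul_if3Density_if3Transform {p c q : ℝ} (hp : -1 < p) (hc : 0 < c)
    (hq : 0 < q) (x0 : ℝ) {u : ℝ} (hu : u ∈ Ioo (0 : ℝ) 1) :
    |c * (p + 1) ^ (-1 / q) * (-1 / q * u ^ (-1 / q - 1))| *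
      if3Density p c q x0 (if3Transform p c q x0 u) = (p + 1) * (1 - u) ^ p := by
  have hp1 : 0 < p + 1 := by linarith
  have hP : (p + 1) ^ (-1 / q) * ((p + 1) ^ (-1 / q)) ^ (-q - 1) = p + 1 := by
    rw [← rpow_mul hp1.le, ← rpow_add hp1,
      show -1 / q + -1 / q * (-q - 1) = 1 by field_simp; ring, rpow_one]
  have hU : u ^ (-1 / q - 1) * (u ^ (-1 / q)) ^ (-q - 1) = 1 := by
    rw [← rpow_mul hu.1.le, ← rpow_add hu.1,
      show -1 / q - 1 + -1 / q * (-q - 1) = 0 by field_simp; ring, rpow_zero]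
  have hinv : (p + 1) ^ (1 / q) * (p + 1) ^ (-1 / q) = 1 := by
    rw [← rpow_add hp1, show 1 / q + -1 / q = 0 by ring, rpow_zero]
  have hu_eq : (u ^ (-1 / q)) ^ (-q) = u := by
    rw [← rpow_mul hu.1.le, show -1 / q * -q = 1 by field_simp, rpow_one]
  have hshift : (if3Transform p c q x0 u - x0) / c = (p + 1) ^ (-1 / q) * (u ^ (-1 / q) - 1) := by
    rw [if3Transform]
    field_simp
    ring
  have hderiv : |c * (p + 1) ^ (-1 / q) * (-1 / q * u ^ (-1 / q - 1))| =
      c * (p + 1) ^ (-1 / q) * u ^ (-1 / q - 1) / q := by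
    rw [abs_of_neg (mul_neg_of_pos_of_neg (mul_pos hc (rpow_pos_of_pos hp1 _))
      (mul_neg_of_neg_of_pos (by simpa [neg_div] using hq) (rpow_pos_of_pos hu.1 _)))]
    ring
  have hbase : (p + 1) ^ (-1 / q) + (if3Transform p c q x0 u - x0) / c =
      (p + 1) ^ (-1 / q) * u ^ (-1 / q) := by
    rw [hshift]
    ring
  have hinner : 1 + (p + 1) ^ (1 / q) * ((if3Transform p c q x0 u - x0) / c) = u ^ (-1 / q) := by
    rw [hshift, ← mul_assoc, hinv]
    ring
  rw [hderiv, if3Density, hbase, hinner, hu_eq,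
    mul_rpow (rpow_pos_of_pos hp1 _).le (rpow_pos_of_pos hu.1 _).le]
  calc _ = ((p + 1) ^ (-1 / q) * ((p + 1) ^ (-1 / q)) ^ (-q - 1)) *
        (u ^ (-1 / q - 1) * (u ^ (-1 / q)) ^ (-q - 1)) * (1 - u) ^ p := by
        field_simp
    _ = _ := by rw [hP, hU, mul_one]

theorem setIntegral_Ioi_mul_if3Density {p c q : ℝ} (hp : -1 < p) (hc : 0 < c) (hq : 0 < q)
    (x0 : ℝ) (g : ℝ → ℝ) :
    ∫ x in Ioi x0, g x * if3Density p c q x0 x =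
      (p + 1) * ∫ u in Ioo 0 1, g (if3Transform p c q x0 u) * (1 - u) ^ p := by
  rw [← if3Transform_image_Ioo hp hc hq x0, integral_image_eq_integral_abs_deriv_smul
    measurableSet_Ioo (fun u hu => (hasDerivAt_if3Transform p c q x0 hu.1).hasDerivWithinAt)
    ((strictAntiOn_if3Transform hp hc hq x0).injOn.mono Ioo_subset_Ioi_self),
    ← integral_const_mul]
  refine setIntegral_congr_fun measurableSet_Ioo fun u hu => ?_
  rw [smul_eq_mul, mul_left_comm, abs_deriv_mul_if3Density_if3Transform hp hc hq x0 hu]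
  ring

theorem if3_moment_general (p c q x0 : ℝ) (r : ℕ) (hp : 0 ≤ p) (hc : 0 < c) (hq : 0 < q)
    (hr : (r : ℝ) < q) :
    ∫ x in Set.Ioi x0,
        x ^ r * (q / c * ((p + 1) ^ (-1 / q) + (x - x0) / c) ^ (-q - 1) *
          (1 - (1 + (p + 1) ^ (1 / q) * ((x - x0) / c)) ^ (-q)) ^ p) =
      ∑ i ∈ Finset.range (r + 1),
        (r.choose i : ℝ) * x0 ^ i * c ^ (r - i) * (p + 1) ^ (1 - ((r : ℝ) - i) / q) *
          ∑ k ∈ Finset.range (r - i + 1),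
            ((r - i).choose k : ℝ) * (-1) ^ k *
              betaFn (1 - (((r : ℝ) - i) - k) / q) (p + 1) := by
  have hp' : -1 < p := by linarith
  have hscale : ∀ m : ℕ,
      (c * (p + 1) ^ (-1 / q)) ^ m * (p + 1) = c ^ m * (p + 1) ^ (1 - (m : ℝ) / q) := fun m => by
    rw [mul_pow, ← rpow_natCast ((p + 1) ^ (-1 / q)), ← rpow_mul (by linarith),
      show (1 : ℝ) - m / q = -1 / q * m + 1 by ring, rpow_add (by linarith), rpow_one, mul_assoc]
  change ∫ x in Ioi x0, x ^ r * if3Density p c q x0 x = _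
  rw [setIntegral_Ioi_mul_if3Density hp' hc hq x0]
  unfold if3Transform
  rw [integral_add_mul_rpow_neg_inv_sub_one_pow_mul hp' hq hr, mul_sum]
  refine sum_congr rfl fun i hi => ?_
  rw [← Nat.cast_sub (Nat.lt_succ_iff.mp (mem_range.mp hi)), mul_assoc _ (c ^ (r - i)),
    ← hscale]
  ring

/-- The `r`-th moment of the IF3 distribution. -/
theorem if3_moment (p c q x0 : ℝ) (r : ℕ) (hp : 0 ≤ p) (hc : 0 < c) (hq : 0 < q)
    (hx0 : 0 ≤ x0) (hr : (r : ℝ) < q) :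
    ∫ x in Set.Ioi x0,
        x ^ r * (q / c * ((p + 1) ^ (-1 / q) + (x - x0) / c) ^ (-q - 1) *
          (1 - (1 + (p + 1) ^ (1 / q) * ((x - x0) / c)) ^ (-q)) ^ p) =
      ∑ i ∈ Finset.range (r + 1),
        (r.choose i : ℝ) * x0 ^ i * c ^ (r - i) * (p + 1) ^ (1 - ((r : ℝ) - i) / q) *
          ∑ k ∈ Finset.range (r - i + 1),
            ((r - i).choose k : ℝ) * (-1) ^ k *
              betaFn (1 - (((r : ℝ) - i) - k) / q) (p + 1) :=
  if3_moment_general p c q x0 r hp hc hq hr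
end

section
/- Let b ∈ ℝ with b ≠ 0, c > 0, x0 ≥ 0, and let q be a natural number with q ≥ 1. Then the differential entropy of the IF1 distribution, -∫_{x0}^∞ f(x)·ln(f(x)) dx with f(x) = (|b|q/c)·((x-x0)/c)^(b-1)·(1 + ((x-x0)/c)^b)^(-q-1), equals -ln(|b|q/c) + ((b-1)/b)·H_{q-1} + (q+1)/q, where H_{q-1} = Σ_{k=1}^{q-1} 1/k. -/
/-!
The substitution `t = ((x - x0) / c) ^ b` carries the IF1 density to the Lomax density
`q (1 + t) ^ (-q - 1)` on `(0, ∞)`, and `log f` becomes an affine combination of `1`, `log t`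
and `log (1 + t)`. The three Lomax integrals follow from explicit antiderivatives and the
fundamental theorem of calculus on `(0, ∞)`. The harmonic number comes from
`log t = log (t / (1 + t)) + log (1 + t)`: integrating `(1 + t) ^ (-n - 1) * log (t / (1 + t))`
by parts against `1 - (1 + t) ^ (-n)` leaves `(1 - (1 + t) ^ (-n)) / (t (1 + t))`, which is the
geometric sum `∑_{k < n} (1 + t) ^ (-k - 2)`; its antiderivative
`-∑_{k < n} (1 + t) ^ (-k - 1) / (k + 1)` equals `-H_n` at `0`.
-/

open MeasureTheory Real Set Filter Topology

theorem integral_Ioi_comp_sub_div_rpow {E : Type*} [NormedAddCommGroup E] [NormedSpace ℝ E]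
    (g : ℝ → E) {b c : ℝ} (x₀ : ℝ) (hb : b ≠ 0) (hc : 0 < c) :
    ∫ x in Ioi x₀, (|b| / c * ((x - x₀) / c) ^ (b - 1)) • g (((x - x₀) / c) ^ b) =
      ∫ t in Ioi 0, g t := by
  set F : ℝ → E := fun v ↦ (|b| / c * v ^ (b - 1)) • g (v ^ b)
  have hshift : ∫ x in Ioi x₀, F ((x - x₀) / c) = ∫ u in Ioi 0, F (u * c⁻¹) := by
    rw [← (measurePreserving_add_right volume x₀).setIntegral_preimage_emb
      (measurableEmbedding_addRight x₀), preimage_add_const_Ioi, sub_self]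
    simp [div_eq_mul_inv]
  calc ∫ x in Ioi x₀, F ((x - x₀) / c)
      = c • ∫ v in Ioi 0, F v := by
        rw [hshift, integral_comp_mul_right_Ioi F 0 (inv_pos.mpr hc), zero_mul, inv_inv]
    _ = ∫ v in Ioi 0, (|b| * v ^ (b - 1)) • g (v ^ b) := by
        rw [← integral_smul]
        simp only [F, smul_smul]
        congr! 3
        field_simp
    _ = ∫ t in Ioi 0, g t := integral_comp_rpow_Ioi g hb

lemma log_mul_rpow_mul_one_add_rpow {A b q v : ℝ} (hA : A ≠ 0) (hb : b ≠ 0) (hv : 0 < v) :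
    log (A * v ^ (b - 1) * (1 + v ^ b) ^ (-q - 1)) =
      log A + (b - 1) / b * log (v ^ b) + (-q - 1) * log (1 + v ^ b) := by
  rw [log_mul (by positivity) (by positivity), log_mul hA (by positivity), log_rpow hv,
    log_rpow (by positivity), log_rpow hv]
  field_simp

section OneAddRpow

variable {a : ℝ}

lemma tendsto_one_add_rpow_neg_atTop (ha : 0 < a) :
    Tendsto (fun t : ℝ ↦ (1 + t) ^ (-a)) atTop (𝓝 0) :=
  (tendsto_rpow_neg_atTop ha).comp (tendsto_atTop_add_const_left _ 1 tendsto_id)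

lemma hasDerivAt_one_add_rpow_neg {t : ℝ} (ht : 0 < 1 + t) :
    HasDerivAt (fun t : ℝ ↦ (1 + t) ^ (-a)) (-a * (1 + t) ^ (-a - 1)) t := by
  simpa using ((hasDerivAt_id t).const_add 1).rpow_const (p := -a) (Or.inl ht.ne')

theorem integral_one_add_rpow_neg_sub_one (ha : 0 < a) :
    IntegrableOn (fun t : ℝ ↦ (1 + t) ^ (-a - 1)) (Ioi 0) ∧
      ∫ t in Ioi 0, (1 + t) ^ (-a - 1) = a⁻¹ := by
  set F : ℝ → ℝ := fun t ↦ -(1 + t) ^ (-a) / a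
  have hderiv : ∀ t ∈ Ici (0 : ℝ), HasDerivAt F ((1 + t) ^ (-a - 1)) t := fun t ht ↦ by
    refine ((hasDerivAt_one_add_rpow_neg (a := a) (t := t) (by grind)).neg.div_const a
      ).congr_deriv ?_
    field_simp
  have hnonneg : ∀ t ∈ Ioi (0 : ℝ), 0 ≤ (1 + t) ^ (-a - 1) := fun t ht ↦ by
    have : (0 : ℝ) ≤ 1 + t := by grind
    positivity
  have hlim : Tendsto F atTop (𝓝 0) := by
    simpa [F] using (tendsto_one_add_rpow_neg_atTop ha).neg.div_const a
  refine ⟨integrableOn_Ioi_deriv_of_nonneg' hderiv hnonneg hlim, ?_⟩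
  rw [integral_Ioi_of_hasDerivAt_of_nonneg' hderiv hnonneg hlim]
  simp [F, neg_div]

theorem integral_one_add_rpow_neg_sub_one_mul_log_one_add (ha : 0 < a) :
    IntegrableOn (fun t : ℝ ↦ (1 + t) ^ (-a - 1) * log (1 + t)) (Ioi 0) ∧
      ∫ t in Ioi 0, (1 + t) ^ (-a - 1) * log (1 + t) = (a ^ 2)⁻¹ := by
  set F : ℝ → ℝ := fun t ↦ -(1 + t) ^ (-a) * (log (1 + t) / a + (a ^ 2)⁻¹)
  have hderiv : ∀ t ∈ Ici (0 : ℝ), HasDerivAt F ((1 + t) ^ (-a - 1) * log (1 + t)) t :=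
    fun t ht ↦ by
    have ht : 0 < 1 + t := by grind
    have hlog : HasDerivAt (fun t : ℝ ↦ log (1 + t)) (1 + t)⁻¹ t := by
      simpa using ((hasDerivAt_id t).const_add 1).log ht.ne'
    refine ((hasDerivAt_one_add_rpow_neg (a := a) ht).neg.mul
      ((hlog.div_const a).add_const (a ^ 2)⁻¹)).congr_deriv ?_
    rw [rpow_sub ht, rpow_one]
    simp only [Pi.neg_apply]
    field_simp
    ring
  have hnonneg : ∀ t ∈ Ioi (0 : ℝ), 0 ≤ (1 + t) ^ (-a - 1) * log (1 + t) := fun t ht ↦ by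
    have : (0 : ℝ) ≤ 1 + t := by grind
    have : 0 ≤ log (1 + t) := log_nonneg (by grind)
    positivity
  have hlim : Tendsto F atTop (𝓝 0) := by
    have hlogdiv : Tendsto (fun t : ℝ ↦ (1 + t) ^ (-a) * log (1 + t)) atTop (𝓝 0) := by
      refine ((isLittleO_log_rpow_atTop ha).tendsto_div_nhds_zero.comp
        (tendsto_atTop_add_const_left _ 1 tendsto_id)).congr' ?_
      filter_upwards [eventually_gt_atTop 0] with t ht
      simp [rpow_neg (by grind : (0 : ℝ) ≤ 1 + t), div_eq_inv_mul]
    convert ((hlogdiv.div_const a).add ((tendsto_one_add_rpow_neg_atTop ha).mul_const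
      (a ^ 2)⁻¹)).neg using 1
    · ext t; simp only [F]; ring
    · simp
  refine ⟨integrableOn_Ioi_deriv_of_nonneg' hderiv hnonneg hlim, ?_⟩
  rw [integral_Ioi_of_hasDerivAt_of_nonneg' hderiv hnonneg hlim]
  simp [F]

end OneAddRpow

section LogRatio

lemma one_sub_inv_one_add_pow (n : ℕ) {t : ℝ} (ht : 1 + t ≠ 0) :
    1 - ((1 + t) ^ n)⁻¹ = t * ∑ k ∈ Finset.range n, ((1 + t) ^ (k + 1))⁻¹ := by
  induction n with
  | zero => simp
  | succ n ih =>
    rw [Finset.sum_range_succ, mul_add, ← ih]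
    field_simp
    ring

lemma hasDerivAt_inv_one_add_pow (k : ℕ) {t : ℝ} (ht : 1 + t ≠ 0) :
    HasDerivAt (fun t : ℝ ↦ ((1 + t) ^ k)⁻¹) (-k * ((1 + t) ^ (k + 1))⁻¹) t := by
  refine (((hasDerivAt_id t).const_add 1).fun_pow k).fun_inv (pow_ne_zero k ht)
    |>.congr_deriv ?_
  cases k with
  | zero => simp
  | succ k => simp only [id, Nat.add_sub_cancel]; field_simp; ring

lemma tendsto_inv_one_add_pow_atTop {k : ℕ} (hk : k ≠ 0) :
    Tendsto (fun t : ℝ ↦ ((1 + t) ^ k)⁻¹) atTop (𝓝 0) :=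
  tendsto_inv_atTop_zero.comp
    ((tendsto_pow_atTop hk).comp (tendsto_atTop_add_const_left _ 1 tendsto_id))

lemma tendsto_log_sub_log_one_add_atTop :
    Tendsto (fun t : ℝ ↦ log t - log (1 + t)) atTop (𝓝 0) := by
  have h : Tendsto (fun t : ℝ ↦ log (1 + t⁻¹)) atTop (𝓝 0) := by
    have h1 : Tendsto (fun t : ℝ ↦ 1 + t⁻¹) atTop (𝓝 1) := by
      simpa using tendsto_inv_atTop_zero.const_add (1 : ℝ)
    simpa [Function.comp_def] using (continuousAt_log one_ne_zero).tendsto.comp h1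
  rw [← neg_zero]
  refine h.neg.congr' ?_
  filter_upwards [eventually_gt_atTop 0] with t ht
  rw [show 1 + t⁻¹ = (1 + t) / t by field_simp; ring, log_div (by positivity) ht.ne']
  simp

noncomputable def logRatioAntideriv (n : ℕ) (t : ℝ) : ℝ :=
  ((1 - ((1 + t) ^ n)⁻¹) * (log t - log (1 + t)) +
    ∑ k ∈ Finset.range n, ((1 + t) ^ (k + 1))⁻¹ / (k + 1)) / n

variable {n : ℕ}

lemma hasDerivAt_logRatioAntideriv (hn : n ≠ 0) {t : ℝ} (ht : 0 < t) :
    HasDerivAt (logRatioAntideriv n) (((1 + t) ^ (n + 1))⁻¹ * (log t - log (1 + t))) t := by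
  have ht' : 1 + t ≠ 0 := by positivity
  have hL : HasDerivAt (fun t : ℝ ↦ log t - log (1 + t)) (t⁻¹ - (1 + t)⁻¹) t := by
    refine (hasDerivAt_log ht.ne').sub ?_
    simpa using ((hasDerivAt_id t).const_add 1).log ht'
  have hS :
      HasDerivAt (fun t : ℝ ↦ ∑ k ∈ Finset.range n, ((1 + t) ^ (k + 1))⁻¹ / (k + 1))
      (-∑ k ∈ Finset.range n, ((1 + t) ^ (k + 2))⁻¹) t := by
    rw [← Finset.sum_neg_distrib]
    refine HasDerivAt.fun_sum fun k _ ↦ ?_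
    refine ((hasDerivAt_inv_one_add_pow (k + 1) ht').div_const _).congr_deriv ?_
    push_cast
    field_simp
  have hgeom : (t * ∑ k ∈ Finset.range n, ((1 + t) ^ (k + 1))⁻¹) * (t⁻¹ - (1 + t)⁻¹) =
      ∑ k ∈ Finset.range n, ((1 + t) ^ (k + 2))⁻¹ := by
    rw [Finset.mul_sum, Finset.sum_mul]
    refine Finset.sum_congr rfl fun k _ ↦ ?_
    field_simp
    ring
  refine ((((hasDerivAt_inv_one_add_pow n ht').const_sub 1).mul hL).add hS |>.div_const
    (n : ℝ)).congr_deriv ?_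
  rw [one_sub_inv_one_add_pow n ht', hgeom]
  field_simp
  ring

lemma tendsto_logRatioAntideriv_atTop (hn : n ≠ 0) :
    Tendsto (logRatioAntideriv n) atTop (𝓝 0) := by
  have hS : Tendsto (fun t : ℝ ↦ ∑ k ∈ Finset.range n, ((1 + t) ^ (k + 1))⁻¹ / (k + 1))
      atTop (𝓝 0) := by
    simpa using tendsto_finsetSum (Finset.range n) fun k _ ↦
      (tendsto_inv_one_add_pow_atTop k.succ_ne_zero).div_const ((k : ℝ) + 1)
  have h := ((((tendsto_inv_one_add_pow_atTop hn).const_sub 1).mul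
    tendsto_log_sub_log_one_add_atTop).add hS).div_const (n : ℝ)
  rwa [sub_zero, one_mul, zero_add, zero_div] at h

lemma continuousAt_logRatioAntideriv_zero (n : ℕ) : ContinuousAt (logRatioAntideriv n) 0 := by
  -- `1 - (1 + t)⁻ⁿ = t * ∑ ...` turns the singular `log t` into the continuous `t * log t`.
  have hF : logRatioAntideriv n =ᶠ[𝓝 0] fun t ↦ ((t * log t - t * log (1 + t)) *
      ∑ k ∈ Finset.range n, ((1 + t) ^ (k + 1))⁻¹ +
      ∑ k ∈ Finset.range n, ((1 + t) ^ (k + 1))⁻¹ / (k + 1)) / n := by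
    filter_upwards [eventually_gt_nhds (show (-1 : ℝ) < 0 by norm_num)] with t ht
    rw [logRatioAntideriv, one_sub_inv_one_add_pow n (show 1 + t ≠ 0 by linarith)]
    ring
  refine ContinuousAt.congr ?_ hF.symm
  have h : ContinuousAt (fun t : ℝ ↦ t * log (1 + t)) 0 :=
    continuousAt_id.mul ((continuousAt_log (by norm_num)).comp (by fun_prop))
  refine (((continuous_mul_log.continuousAt.sub h).mul ?_).add ?_).div_const _ <;>
    fun_prop (disch := norm_num)

lemma logRatioAntideriv_zero (n : ℕ) : logRatioAntideriv n 0 = harmonic n / n := by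
  simp [logRatioAntideriv, harmonic]

theorem integral_inv_one_add_pow_mul_log_sub_log (hn : n ≠ 0) :
    IntegrableOn (fun t ↦ ((1 + t) ^ (n + 1))⁻¹ * (log t - log (1 + t))) (Ioi 0) ∧
      ∫ t in Ioi 0, ((1 + t) ^ (n + 1))⁻¹ * (log t - log (1 + t)) = -harmonic n / n := by
  have hcont := (continuousAt_logRatioAntideriv_zero n).continuousWithinAt (s := Ici 0)
  have hderiv := fun t (ht : t ∈ Ioi (0 : ℝ)) ↦ hasDerivAt_logRatioAntideriv hn ht
  have hnonpos : ∀ t ∈ Ioi (0 : ℝ), ((1 + t) ^ (n + 1))⁻¹ * (log t - log (1 + t)) ≤ 0 :=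
    fun t (ht : 0 < t) ↦ mul_nonpos_of_nonneg_of_nonpos (by positivity)
      (sub_nonpos.mpr (log_le_log ht (by linarith)))
  have hlim := tendsto_logRatioAntideriv_atTop hn
  refine ⟨integrableOn_Ioi_deriv_of_nonpos hcont hderiv hnonpos hlim, ?_⟩
  rw [integral_Ioi_of_hasDerivAt_of_nonpos hcont hderiv hnonpos hlim, logRatioAntideriv_zero,
    zero_sub, neg_div]

end LogRatio

theorem integral_one_add_rpow_neg_sub_one_mul_log {n : ℕ} (hn : n ≠ 0) :
    IntegrableOn (fun t : ℝ ↦ (1 + t) ^ (-(n : ℝ) - 1) * log t) (Ioi 0) ∧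
      ∫ t in Ioi 0, (1 + t) ^ (-(n : ℝ) - 1) * log t = -harmonic (n - 1) / n := by
  obtain ⟨hL, hL'⟩ := integral_inv_one_add_pow_mul_log_sub_log hn
  obtain ⟨h1, h1'⟩ := integral_one_add_rpow_neg_sub_one_mul_log_one_add
    (a := n) (Nat.cast_pos.mpr (Nat.pos_of_ne_zero hn))
  have hsplit : EqOn (fun t : ℝ ↦ ((1 + t) ^ (n + 1))⁻¹ * (log t - log (1 + t)) +
      (1 + t) ^ (-(n : ℝ) - 1) * log (1 + t)) (fun t ↦ (1 + t) ^ (-(n : ℝ) - 1) * log t)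
      (Ioi 0) := fun t (ht : 0 < t) ↦ by
    simp only [← neg_add', ← Nat.cast_add_one, rpow_neg (by linarith : (0 : ℝ) ≤ 1 + t),
      rpow_natCast]
    ring
  refine ⟨(hL.add h1).congr_fun hsplit measurableSet_Ioi, ?_⟩
  rw [← setIntegral_congr_fun measurableSet_Ioi hsplit, integral_add hL h1, hL', h1']
  obtain ⟨m, rfl⟩ := Nat.exists_eq_add_one_of_ne_zero hn
  push_cast [harmonic_succ]
  field_simp
  ring

theorem integral_lomax_mul_log_combination {n : ℕ} (hn : n ≠ 0) (α β γ : ℝ) :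
    ∫ t in Ioi 0, n * (1 + t) ^ (-(n : ℝ) - 1) * (α + β * log t + γ * log (1 + t)) =
      α - β * harmonic (n - 1) + γ / n := by
  have hn₀ : (0 : ℝ) < n := by exact_mod_cast Nat.pos_of_ne_zero hn
  obtain ⟨hP, hP'⟩ := integral_one_add_rpow_neg_sub_one hn₀
  obtain ⟨hlog, hlog'⟩ := integral_one_add_rpow_neg_sub_one_mul_log hn
  obtain ⟨hlog1, hlog1'⟩ := integral_one_add_rpow_neg_sub_one_mul_log_one_add hn₀
  have hsplit :
      (fun t : ℝ ↦ n * (1 + t) ^ (-(n : ℝ) - 1) * (α + β * log t + γ * log (1 + t))) =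
      fun t ↦ n * α * (1 + t) ^ (-(n : ℝ) - 1) +
        n * β * ((1 + t) ^ (-(n : ℝ) - 1) * log t) +
        n * γ * ((1 + t) ^ (-(n : ℝ) - 1) * log (1 + t)) := by
    ext t
    ring
  rw [hsplit, integral_add ((hP.const_mul _).fun_add (hlog.const_mul _)) (hlog1.const_mul _),
    integral_add (hP.const_mul _) (hlog.const_mul _), integral_const_mul, integral_const_mul,
    integral_const_mul, hP', hlog', hlog1']
  field_simp
  ring

theorem if1_entropy_general (b c x0 : ℝ) (q : ℕ) (hb : b ≠ 0) (hc : 0 < c) (hq : 1 ≤ q)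
    (f : ℝ → ℝ)
    (hf : ∀ x, f x =
      |b| * (q : ℝ) / c * ((x - x0) / c) ^ (b - 1) *
        (1 + ((x - x0) / c) ^ b) ^ (-(q : ℝ) - 1)) :
    -∫ x in Set.Ioi x0, f x * Real.log (f x) =
      -Real.log (|b| * (q : ℝ) / c) +
        (b - 1) / b * (∑ k ∈ Finset.range (q - 1), (1 : ℝ) / (k + 1)) +
        ((q : ℝ) + 1) / (q : ℝ) := by
  set g : ℝ → ℝ := fun t ↦ q * (1 + t) ^ (-(q : ℝ) - 1) *
    (log (|b| * q / c) + (b - 1) / b * log t + (-q - 1) * log (1 + t)) with hg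
  have hfg : EqOn (fun x ↦ f x * log (f x))
      (fun x ↦ (|b| / c * ((x - x0) / c) ^ (b - 1)) • g (((x - x0) / c) ^ b)) (Ioi x0) :=
      fun x (hx : x0 < x) ↦ by
    have hA : |b| * q / c ≠ 0 := by positivity
    simp only [g, hf, smul_eq_mul]
    rw [log_mul_rpow_mul_one_add_rpow hA hb (div_pos (sub_pos.mpr hx) hc)]
    ring
  rw [setIntegral_congr_fun measurableSet_Ioi hfg, integral_Ioi_comp_sub_div_rpow g x0 hb hc, hg,
    integral_lomax_mul_log_combination (by omega)]
  push_cast [harmonic, one_div]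
  field_simp
  ring

/-- The differential entropy of the IF1 distribution with integer tail-weight
parameter `q ≥ 1`. -/
theorem if1_entropy (b c x0 : ℝ) (q : ℕ) (hb : b ≠ 0) (hc : 0 < c) (hq : 1 ≤ q)
    (hx0 : 0 ≤ x0)
    (f : ℝ → ℝ)
    (hf : ∀ x, f x =
      |b| * (q : ℝ) / c * ((x - x0) / c) ^ (b - 1) *
        (1 + ((x - x0) / c) ^ b) ^ (-(q : ℝ) - 1)) :
    -∫ x in Set.Ioi x0, f x * Real.log (f x) =
      -Real.log (|b| * (q : ℝ) / c) +
        (b - 1) / b * (∑ k ∈ Finset.range (q - 1), (1 : ℝ) / (k + 1)) +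
        ((q : ℝ) + 1) / (q : ℝ) :=
  if1_entropy_general b c x0 q hb hc hq f hf
end

section
/- Let b ∈ ℝ with b ≠ 0, c > 0, q > 0, x0 ≥ 0. Then the differential entropy of the IF2 distribution, -∫_{x0}^∞ f(x)·ln(f(x)) dx with f(x) = (|b|q/c)·((x-x0)/c)^(-b·q-1)·exp(-((x-x0)/c)^(-b·q)), equals -ln(|b|q/c) + ((b·q+1)/(b·q))·γ_E + 1, where γ_E is the Euler–Mascheroni constant. -/
open MeasureTheory Real Set

private lemma integral_shift_Ioi (g : ℝ → ℝ) (a : ℝ) :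
    ∫ x in Set.Ioi a, g x = ∫ x in Set.Ioi (0:ℝ), g (x + a) := by
  rw [← integral_indicator measurableSet_Ioi, ← integral_indicator measurableSet_Ioi,
    ← integral_add_right_eq_self ((Set.Ioi a).indicator g) a]
  congr 1
  ext x
  by_cases h : 0 < x
  · rw [Set.indicator_of_mem (by simpa using h), Set.indicator_of_mem (by simpa using h)]
  · rw [Set.indicator_of_notMem (by simpa using h), Set.indicator_of_notMem (by simpa using h)]

private lemma exp_neg_log_integrable :
    IntegrableOn (fun y : ℝ => Real.exp (-y) * Real.log y) (Set.Ioi 0) := by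
  rw [← Set.Ioc_union_Ioi_eq_Ioi (zero_le_one : (0:ℝ) ≤ 1), integrableOn_union]
  constructor
  · have hint : IntegrableOn (fun y : ℝ => 2 * y ^ (-(1:ℝ)/2)) (Set.Ioc 0 1) := by
      apply Integrable.const_mul
      exact (intervalIntegrable_iff_integrableOn_Ioc_of_le zero_le_one).mp
        (intervalIntegral.intervalIntegrable_rpow' (by norm_num))
    refine MeasureTheory.Integrable.mono hint ?_ ?_
    · exact ((Real.measurable_exp.comp measurable_neg).mul
        Real.measurable_log).aestronglyMeasurable
    · filter_upwards [ae_restrict_mem measurableSet_Ioc] with y hy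
      obtain ⟨h0, h1⟩ := hy
      have hy2 : (0:ℝ) < y ^ (-(1:ℝ)/2) := Real.rpow_pos_of_pos h0 _
      have hlog : |Real.log y| ≤ 2 * y ^ (-(1:ℝ)/2) := by
        rw [abs_of_nonpos (Real.log_nonpos h0.le h1)]
        have h3 : Real.log (y ^ (-(1:ℝ)/2)) ≤ y ^ (-(1:ℝ)/2) :=
          (Real.log_le_sub_one_of_pos hy2).trans (by linarith)
        rw [Real.log_rpow h0] at h3
        nlinarith
      rw [Real.norm_eq_abs, Real.norm_eq_abs, abs_mul, abs_of_pos (Real.exp_pos _),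
        abs_of_pos (by positivity : (0:ℝ) < 2 * y ^ (-(1:ℝ)/2))]
      have he : Real.exp (-y) ≤ 1 := Real.exp_le_one_iff.mpr (by linarith)
      nlinarith [abs_nonneg (Real.log y), Real.exp_pos (-y)]
  · have hint : IntegrableOn (fun y : ℝ => Real.exp (-y) * y ^ ((2:ℝ) - 1)) (Set.Ioi 1) :=
      (Real.GammaIntegral_convergent two_pos).mono_set (Set.Ioi_subset_Ioi zero_le_one)
    refine MeasureTheory.Integrable.mono hint ?_ ?_
    · exact ((Real.measurable_exp.comp measurable_neg).mul
        Real.measurable_log).aestronglyMeasurable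
    · filter_upwards [ae_restrict_mem measurableSet_Ioi] with y hy
      have h1 : (1:ℝ) < y := hy
      have h0 : (0:ℝ) < y := by linarith
      have hyeq : y ^ ((2:ℝ)-1) = y := by rw [show (2:ℝ)-1 = 1 by norm_num, Real.rpow_one]
      rw [Real.norm_eq_abs, Real.norm_eq_abs, hyeq, abs_mul, abs_mul,
        abs_of_pos (Real.exp_pos _), abs_of_pos h0, abs_of_nonneg (Real.log_nonneg h1.le)]
      have := Real.log_le_sub_one_of_pos h0
      nlinarith [Real.exp_pos (-y)]

private lemma exp_neg_mul_self_integrable :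
    IntegrableOn (fun y : ℝ => Real.exp (-y) * y) (Set.Ioi 0) := by
  refine (Real.GammaIntegral_convergent two_pos).congr_fun ?_ measurableSet_Ioi
  intro y hy
  simp only [show (2:ℝ)-1 = 1 from by norm_num, Real.rpow_one]

private lemma exp_neg_integrable :
    IntegrableOn (fun y : ℝ => Real.exp (-y)) (Set.Ioi 0) := by
  simpa using exp_neg_integrableOn_Ioi 0 (zero_lt_one)

private lemma integral_exp_neg_mul_self : ∫ y in Set.Ioi (0:ℝ), Real.exp (-y) * y = 1 := by
  have h1 : Real.Gamma 2 = ∫ y in Set.Ioi (0:ℝ), Real.exp (-y) * y ^ ((2:ℝ)-1) :=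
    Real.Gamma_eq_integral two_pos
  have h2 : Real.Gamma 2 = 1 := by
    rw [show (2:ℝ) = 1 + 1 by norm_num, Real.Gamma_add_one one_ne_zero, Real.Gamma_one, mul_one]
  rw [← h1.symm.trans h2]
  refine setIntegral_congr_fun measurableSet_Ioi fun y hy => ?_
  rw [show (2:ℝ)-1 = 1 by norm_num, Real.rpow_one]

private lemma integral_exp_neg_mul_log :
    ∫ t in Set.Ioi (0:ℝ), Real.exp (-t) * Real.log t = -Real.eulerMascheroniConstant := by
  have h1 := Complex.hasDerivAt_GammaIntegral (s := 1) (by norm_num)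
  have hset : {s : ℂ | 0 < s.re} ∈ nhds (1:ℂ) :=
    (isOpen_lt continuous_const Complex.continuous_re).mem_nhds (by simp)
  have hev : Complex.Gamma =ᶠ[nhds (1:ℂ)] Complex.GammaIntegral :=
    Filter.eventuallyEq_of_mem hset fun s hs => Complex.Gamma_eq_integral hs
  have h2 : HasDerivAt Complex.Gamma
      (∫ t in Set.Ioi (0:ℝ), (t:ℂ) ^ ((1:ℂ) - 1) * (Real.log t * Real.exp (-t))) 1 :=
    HasDerivAt.congr_of_eventuallyEq h1 hev
  have h3 := h2.unique Complex.hasDerivAt_Gamma_one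
  have h4 : ∫ t in Set.Ioi (0:ℝ), (t:ℂ) ^ ((1:ℂ)-1) * (Real.log t * Real.exp (-t))
      = ((∫ t in Set.Ioi (0:ℝ), Real.log t * Real.exp (-t) : ℝ) : ℂ) := by
    refine Eq.trans (integral_congr_ae (Filter.Eventually.of_forall fun t => ?_))
      _root_.integral_ofReal
    simp [sub_self, Complex.ofReal_mul]
  rw [h4] at h3
  have h5 : ∫ t in Set.Ioi (0:ℝ), Real.log t * Real.exp (-t)
      = -Real.eulerMascheroniConstant := by exact_mod_cast h3
  rw [← h5]
  exact integral_congr_ae (Filter.Eventually.of_forall fun t => mul_comm _ _)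

/-- The differential entropy of the IF2 distribution. -/
theorem if2_entropy (b c q x0 : ℝ) (hb : b ≠ 0) (hc : 0 < c) (hq : 0 < q)
    (hx0 : 0 ≤ x0)
    (f : ℝ → ℝ)
    (hf : ∀ x, f x =
      |b| * q / c * ((x - x0) / c) ^ (-(b * q) - 1) *
        Real.exp (-((x - x0) / c) ^ (-(b * q)))) :
    -∫ x in Set.Ioi x0, f x * Real.log (f x) =
      -Real.log (|b| * q / c) +
        (b * q + 1) / (b * q) * Real.eulerMascheroniConstant + 1 := by
  have hα : b * q ≠ 0 := mul_ne_zero hb hq.ne'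
  set p : ℝ := -(b * q) with hpdef
  have hp : p ≠ 0 := neg_ne_zero.mpr hα
  have habs : |p| = |b| * q := by
    rw [hpdef, abs_neg, abs_mul, abs_of_pos hq]
  set A : ℝ := Real.log (|b| * q / c) with hA
  set B : ℝ := (b * q + 1) / (b * q) with hB
  have hBp : B * p = p - 1 := by
    rw [hB, hpdef]
    field_simp
    ring
  set G : ℝ → ℝ := fun u =>
    |b| * q / c * u ^ (p - 1) * Real.exp (-u ^ p) *
      Real.log (|b| * q / c * u ^ (p - 1) * Real.exp (-u ^ p)) with hGdef
  set k : ℝ → ℝ := fun y => c⁻¹ * (Real.exp (-y) * (A + B * Real.log y - y)) with hkdef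
  have hcne : c ≠ 0 := hc.ne'
  have hpre : (0:ℝ) < |b| * q / c := by
    have : (0:ℝ) < |b| := abs_pos.mpr hb
    positivity
  -- Step 1: shift and rescale
  have step1 : ∫ x in Set.Ioi x0, f x * Real.log (f x) = ∫ x in Set.Ioi (0:ℝ), G (c⁻¹ * x) := by
    rw [integral_shift_Ioi (fun x => f x * Real.log (f x)) x0]
    refine integral_congr_ae (Filter.Eventually.of_forall fun x => ?_)
    have harg : (x + x0 - x0) / c = c⁻¹ * x := by
      rw [add_sub_cancel_right, div_eq_inv_mul]
    simp only [hf, harg, hGdef, hpdef]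
  have step2 : ∫ x in Set.Ioi (0:ℝ), G (c⁻¹ * x) = c • ∫ x in Set.Ioi (0:ℝ), G x := by
    rw [integral_comp_mul_left_Ioi G 0 (inv_pos.mpr hc), inv_inv, mul_zero]
  -- Step 3: rpow substitution
  have step3 : ∫ x in Set.Ioi (0:ℝ), G x = ∫ y in Set.Ioi (0:ℝ), k y := by
    rw [← integral_comp_rpow_Ioi k hp]
    refine setIntegral_congr_fun measurableSet_Ioi fun x hx => ?_
    have hx0' : (0:ℝ) < x := hx
    have hxp : (0:ℝ) < x ^ (p - 1) := Real.rpow_pos_of_pos hx0' _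
    have hlog : Real.log (|b| * q / c * x ^ (p - 1) * Real.exp (-x ^ p))
        = A + (p - 1) * Real.log x + (-x ^ p) := by
      rw [Real.log_mul (by positivity) (Real.exp_ne_zero _),
        Real.log_mul hpre.ne' hxp.ne', Real.log_rpow hx0', Real.log_exp, hA]
    have hlogxp : Real.log (x ^ p) = p * Real.log x := Real.log_rpow hx0' p
    simp only [hGdef, hkdef, smul_eq_mul, hlog, hlogxp, habs]
    rw [← hBp]
    ring
  -- Step 4: compute ∫ k
  have step4 : ∫ y in Set.Ioi (0:ℝ), k y =
      c⁻¹ * (A + B * (-Real.eulerMascheroniConstant) - 1) := by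
    rw [hkdef]
    rw [MeasureTheory.integral_const_mul]
    congr 1
    have hsplit : ∀ y : ℝ, Real.exp (-y) * (A + B * Real.log y - y)
        = A * Real.exp (-y) + B * (Real.exp (-y) * Real.log y) - Real.exp (-y) * y := by
      intro y; ring
    simp_rw [hsplit]
    have i1 : Integrable (fun y : ℝ => A * Real.exp (-y)) (volume.restrict (Set.Ioi 0)) :=
      exp_neg_integrable.const_mul A
    have i2 : Integrable (fun y : ℝ => B * (Real.exp (-y) * Real.log y))
        (volume.restrict (Set.Ioi 0)) := exp_neg_log_integrable.const_mul B
    have i3 : Integrable (fun y : ℝ => Real.exp (-y) * y) (volume.restrict (Set.Ioi 0)) :=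
      exp_neg_mul_self_integrable
    have i12 : Integrable (fun y : ℝ => A * Real.exp (-y) + B * (Real.exp (-y) * Real.log y))
        (volume.restrict (Set.Ioi 0)) := i1.add i2
    rw [integral_sub i12 i3, integral_add i1 i2,
      MeasureTheory.integral_const_mul, MeasureTheory.integral_const_mul,
      integral_exp_neg_Ioi_zero, integral_exp_neg_mul_log, integral_exp_neg_mul_self, mul_one]
  rw [step1, step2, step3, step4, smul_eq_mul, ← mul_assoc, mul_inv_cancel₀ hcne, one_mul]
  ring
end

section
/- Let p be a natural number, c > 0, q > 0, x0 ≥ 0. Then the differential entropy of the IF3 distribution, -∫_{x0}^∞ f(x)·ln(f(x)) dx with f(x) = (q/c)·((p+1)^(-1/q) + (x-x0)/c)^(-q-1)·(1 - (1 + (p+1)^(1/q)·(x-x0)/c)^(-q))^p, equals -ln(q/c) + ((q+1)/q)·(H_{p+1} - ln(p+1)) + p/(p+1), where H_{p+1} = Σ_{k=1}^{p+1} 1/k. -/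
/-!
Substituting `u = (1 + (p + 1)^(1/q) (x - x0) / c)^(-q)`, i.e.
`x = x0 + c (p + 1)^(-1/q) (u^(-1/q) - 1)`, maps `(x0, ∞)` onto `(0, 1)` and turns `f x dx` into
the Beta density `(p + 1) (1 - u)^p du`, while `log f` becomes affine in `log u` and `log (1 - u)`.
The entropy therefore reduces to `∫₀¹ (1 - u)^p log u = -H_{p+1} / (p + 1)` and
`∫₀¹ (1 - u)^p log (1 - u) = -1 / (p + 1)^2`, both computed from explicit antiderivatives; the
harmonic number enters through `(1 - (1 - u)^(p+1)) / u = ∑_{j ≤ p} (1 - u)^j`.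
-/

open MeasureTheory Real Set Finset intervalIntegral

theorem integral_one_sub_pow (n : ℕ) : ∫ u in (0 : ℝ)..1, (1 - u) ^ n = 1 / (n + 1) := by
  simp [integral_comp_sub_left fun u : ℝ => u ^ n]

theorem integral_pow_mul_log (n : ℕ) :
    ∫ u in (0 : ℝ)..1, u ^ n * log u = -1 / (n + 1) ^ 2 := by
  set F : ℝ → ℝ := fun u => u ^ (n + 1) * log u / (n + 1) - u ^ (n + 1) / (n + 1) ^ 2
  have hF : Continuous F := by
    have : F = fun u => u ^ n * (u * log u) / (n + 1) - u ^ (n + 1) / (n + 1) ^ 2 := by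
      ext u; simp only [F]; ring
    rw [this]; fun_prop
  have hF' : ∀ u ∈ Ioo (0 : ℝ) 1, HasDerivAt F (u ^ n * log u) u := by
    intro u hu
    refine ((((hasDerivAt_pow (n + 1) u).fun_mul (hasDerivAt_log hu.1.ne')).div_const
      ((n : ℝ) + 1)).fun_sub ((hasDerivAt_pow (n + 1) u).div_const (((n : ℝ) + 1) ^ 2)))
      |>.congr_deriv ?_
    have := hu.1.ne'
    push_cast [Nat.add_sub_cancel]
    field_simp
    ring
  have hint : IntervalIntegrable (fun u : ℝ => u ^ n * log u) volume 0 1 :=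
    intervalIntegrable_log'.continuousOn_mul (continuous_pow n).continuousOn
  rw [integral_eq_sub_of_hasDerivAt_of_le zero_le_one hF.continuousOn hF' hint]
  simp [F, neg_div]

theorem integral_one_sub_pow_mul_log_one_sub (n : ℕ) :
    ∫ u in (0 : ℝ)..1, (1 - u) ^ n * log (1 - u) = -1 / (n + 1) ^ 2 := by
  rw [integral_comp_sub_left (fun u : ℝ => u ^ n * log u) 1, sub_self, sub_zero,
    integral_pow_mul_log]

theorem integral_one_sub_pow_mul_log (n : ℕ) :
    ∫ u in (0 : ℝ)..1, (1 - u) ^ n * log u =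
      -(∑ k ∈ range (n + 1), (1 : ℝ) / (k + 1)) / (n + 1) := by
  set F : ℝ → ℝ := fun u => ((1 - (1 - u) ^ (n + 1)) * log u
    + ∑ j ∈ range (n + 1), (1 - u) ^ (j + 1) / (j + 1)) / (n + 1)
  have hgeom (u : ℝ) : 1 - (1 - u) ^ (n + 1) = (∑ j ∈ range (n + 1), (1 - u) ^ j) * u := by
    simpa using (geom_sum_mul_neg (1 - u) (n + 1)).symm
  have hF : Continuous F := by
    have : F = fun u => ((∑ j ∈ range (n + 1), (1 - u) ^ j) * (u * log u)
        + ∑ j ∈ range (n + 1), (1 - u) ^ (j + 1) / (j + 1)) / (n + 1) := by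
      ext u; simp only [F, hgeom, mul_assoc]
    rw [this]; fun_prop
  have hF' : ∀ u ∈ Ioo (0 : ℝ) 1, HasDerivAt F ((1 - u) ^ n * log u) u := by
    intro u hu
    have hsub : HasDerivAt (fun u : ℝ => 1 - u) (-1) u := (hasDerivAt_id u).const_sub 1
    have hsum : HasDerivAt
        (fun u : ℝ => ∑ j ∈ range (n + 1), (1 - u) ^ (j + 1) / ((j : ℝ) + 1))
        (-∑ j ∈ range (n + 1), (1 - u) ^ j) u := by
      rw [← sum_neg_distrib]
      refine HasDerivAt.fun_sum fun j _ => ((hsub.fun_pow (j + 1)).div_const _).congr_deriv ?_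
      push_cast [Nat.add_sub_cancel]
      field_simp
    refine (((((hsub.fun_pow (n + 1)).const_sub 1).fun_mul (hasDerivAt_log hu.1.ne')).fun_add
      hsum).div_const ((n : ℝ) + 1)).congr_deriv ?_
    have := hu.1.ne'
    rw [hgeom]
    push_cast [Nat.add_sub_cancel]
    field_simp
    ring
  have hint : IntervalIntegrable (fun u : ℝ => (1 - u) ^ n * log u) volume 0 1 :=
    intervalIntegrable_log'.continuousOn_mul (by fun_prop)
  rw [integral_eq_sub_of_hasDerivAt_of_le zero_le_one hF.continuousOn hF' hint]
  simp [F, neg_div]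

theorem integral_succ_mul_one_sub_pow_mul_log_add (n : ℕ) (a b c : ℝ) :
    ∫ u in (0 : ℝ)..1, (n + 1) * (1 - u) ^ n * (a + b * log u + c * log (1 - u)) =
      a - b * ∑ k ∈ range (n + 1), (1 : ℝ) / (k + 1) - c / (n + 1) := by
  have hlog : IntervalIntegrable (fun u : ℝ => (1 - u) ^ n * log u) volume 0 1 :=
    intervalIntegrable_log'.continuousOn_mul (by fun_prop)
  have hlog_sub : IntervalIntegrable (fun u : ℝ => (1 - u) ^ n * log (1 - u)) volume 0 1 := by
    refine IntervalIntegrable.continuousOn_mul ?_ (by fun_prop)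
    simpa using (intervalIntegrable_log' (a := 1) (b := 0)).comp_sub_left 1
  have hpow : IntervalIntegrable (fun u : ℝ => (1 - u) ^ n) volume 0 1 :=
    (by fun_prop : Continuous fun u : ℝ => (1 - u) ^ n).intervalIntegrable 0 1
  have hsplit : (fun u : ℝ => (n + 1) * (1 - u) ^ n * (a + b * log u + c * log (1 - u))) =
      fun u => ((n + 1) * a) * (1 - u) ^ n + ((n + 1) * b) * ((1 - u) ^ n * log u)
        + ((n + 1) * c) * ((1 - u) ^ n * log (1 - u)) := by
    ext u; ring
  rw [hsplit, integral_add ((hpow.const_mul _).add (hlog.const_mul _)) (hlog_sub.const_mul _),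
    integral_add (hpow.const_mul _) (hlog.const_mul _), intervalIntegral.integral_const_mul,
    intervalIntegral.integral_const_mul, intervalIntegral.integral_const_mul, integral_one_sub_pow,
    integral_one_sub_pow_mul_log, integral_one_sub_pow_mul_log_one_sub]
  field_simp
  ring

theorem image_add_mul_rpow_sub_one_Ioo {k r : ℝ} (hk : 0 < k) (hr : r < 0) (x0 : ℝ) :
    (fun u : ℝ => x0 + k * (u ^ r - 1)) '' Ioo 0 1 = Ioi x0 := by
  ext x
  constructor
  · rintro ⟨u, ⟨hu₀, hu₁⟩, rfl⟩
    have : 1 < u ^ r := one_lt_rpow_of_pos_of_lt_one_of_neg hu₀ hu₁ hr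
    simp only [Set.mem_Ioi, lt_add_iff_pos_right]
    exact mul_pos hk (sub_pos.2 this)
  · intro hx
    have hv : 1 < 1 + (x - x0) / k := lt_add_of_pos_right _ (div_pos (sub_pos.2 hx) hk)
    refine ⟨(1 + (x - x0) / k) ^ r⁻¹, ⟨by positivity,
      rpow_lt_one_of_one_lt_of_neg hv (inv_lt_zero.2 hr)⟩, ?_⟩
    dsimp only
    rw [← rpow_mul (by linarith), inv_mul_cancel₀ hr.ne, rpow_one]
    field_simp
    ring

theorem integral_Ioi_eq_integral_Ioo_comp_rpow {E : Type*} [NormedAddCommGroup E]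
    [NormedSpace ℝ E] {k r : ℝ} (hk : 0 < k) (hr : r < 0) (x0 : ℝ) (g : ℝ → E) :
    ∫ x in Ioi x0, g x =
      ∫ u in Ioo 0 1, (-(k * r) * u ^ (r - 1)) • g (x0 + k * (u ^ r - 1)) := by
  have hderiv : ∀ u ∈ Ioo (0 : ℝ) 1, HasDerivWithinAt (fun u : ℝ => x0 + k * (u ^ r - 1))
      (k * (r * u ^ (r - 1))) (Ioo 0 1) u := fun u hu =>
    (((hasDerivAt_rpow_const (Or.inl hu.1.ne')).sub_const 1).const_mul k).const_add x0
      |>.hasDerivWithinAt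
  have hinj : InjOn (fun u : ℝ => x0 + k * (u ^ r - 1)) (Ioo 0 1) := by
    intro u hu v hv huv
    refine (strictAntiOn_rpow_Ioi_of_exponent_neg hr).injOn hu.1 hv.1 ?_
    simpa [hk.ne'] using huv
  rw [← image_add_mul_rpow_sub_one_Ioo hk hr x0, integral_image_eq_integral_abs_deriv_smul
    measurableSet_Ioo hderiv hinj]
  refine setIntegral_congr_fun measurableSet_Ioo fun u hu => ?_
  rw [abs_of_neg (mul_neg_of_pos_of_neg hk (mul_neg_of_neg_of_pos hr (rpow_pos_of_pos hu.1 _)))]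
  ring_nf

noncomputable def if3Pdf (p : ℕ) (c q x0 x : ℝ) : ℝ :=
  q / c * (((p : ℝ) + 1) ^ (-1 / q) + (x - x0) / c) ^ (-q - 1) *
    (1 - (1 + ((p : ℝ) + 1) ^ (1 / q) * ((x - x0) / c)) ^ (-q)) ^ p

section
variable (p : ℕ) {c q : ℝ} (x0 : ℝ) {u : ℝ}

theorem if3Pdf_comp_rpow (hc : c ≠ 0) (hq : q ≠ 0) (hu : 0 < u) :
    if3Pdf p c q x0 (x0 + c * ((p : ℝ) + 1) ^ (-1 / q) * (u ^ (-1 / q) - 1)) =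
      q / c * (((p : ℝ) + 1) * u) ^ ((q + 1) / q) * (1 - u) ^ p := by
  have hA : (0 : ℝ) < p + 1 := by positivity
  have hscaled : (x0 + c * ((p : ℝ) + 1) ^ (-1 / q) * (u ^ (-1 / q) - 1) - x0) / c =
      ((p : ℝ) + 1) ^ (-1 / q) * (u ^ (-1 / q) - 1) := by
    field_simp; ring
  have hinv : ((p : ℝ) + 1) ^ (1 / q) * ((p : ℝ) + 1) ^ (-1 / q) = 1 := by
    rw [← rpow_add hA, ← add_div, add_neg_cancel, zero_div, rpow_zero]
  have hfirst : ((p : ℝ) + 1) ^ (-1 / q) + ((p : ℝ) + 1) ^ (-1 / q) * (u ^ (-1 / q) - 1) =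
      (((p : ℝ) + 1) * u) ^ (-1 / q) := by
    rw [mul_rpow hA.le hu.le]; ring
  have hsecond : 1 + ((p : ℝ) + 1) ^ (1 / q) * (((p : ℝ) + 1) ^ (-1 / q) * (u ^ (-1 / q) - 1)) =
      u ^ (-1 / q) := by
    rw [← mul_assoc, hinv]; ring
  rw [if3Pdf, hscaled, hfirst, hsecond, ← rpow_mul (by positivity), ← rpow_mul hu.le]
  congr 3
  · field_simp; ring
  · field_simp; simp

theorem jacobian_mul_if3Pdf_comp_rpow (hc : c ≠ 0) (hq : q ≠ 0) (hu : 0 < u) :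
    -(c * ((p : ℝ) + 1) ^ (-1 / q) * (-1 / q)) * u ^ (-1 / q - 1) *
        if3Pdf p c q x0 (x0 + c * ((p : ℝ) + 1) ^ (-1 / q) * (u ^ (-1 / q) - 1)) =
      ((p : ℝ) + 1) * (1 - u) ^ p := by
  have hA : (0 : ℝ) < p + 1 := by positivity
  have hpow :
      ((p : ℝ) + 1) ^ (-1 / q) * u ^ (-1 / q - 1) * (((p : ℝ) + 1) * u) ^ ((q + 1) / q) =
        (p : ℝ) + 1 := by
    rw [rpow_sub_one hu.ne', ← mul_div_assoc, ← mul_rpow hA.le hu.le, div_mul_eq_mul_div,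
      ← rpow_add (by positivity), show -1 / q + (q + 1) / q = 1 by field_simp; ring, rpow_one,
      mul_div_cancel_right₀ _ hu.ne']
  have hcq : c / c * (q / q) = 1 := by field_simp
  rw [if3Pdf_comp_rpow p x0 hc hq hu]
  linear_combination (1 - u) ^ p * hpow + ((p : ℝ) + 1) ^ (-1 / q) * u ^ (-1 / q - 1) *
    (((p : ℝ) + 1) * u) ^ ((q + 1) / q) * (1 - u) ^ p * hcq

theorem log_if3Pdf_comp_rpow (hc : c ≠ 0) (hq : q ≠ 0) (hu : u ∈ Set.Ioo 0 1) :
    log (if3Pdf p c q x0 (x0 + c * ((p : ℝ) + 1) ^ (-1 / q) * (u ^ (-1 / q) - 1))) =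
      log (q / c) + (q + 1) / q * (log ((p : ℝ) + 1) + log u) + p * log (1 - u) := by
  obtain ⟨hu₀, hu₁⟩ := hu
  have hA : (0 : ℝ) < p + 1 := by positivity
  rw [if3Pdf_comp_rpow p x0 hc hq hu₀,
    log_mul (by positivity) (pow_ne_zero _ (sub_pos.2 hu₁).ne'),
    log_mul (by positivity) (by positivity), log_rpow (by positivity), log_mul hA.ne' hu₀.ne',
    log_pow]

theorem jacobian_smul_if3Pdf_mul_log_comp_rpow (hc : c ≠ 0) (hq : q ≠ 0)
    (hu : u ∈ Set.Ioo 0 1) :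
    (-(c * ((p : ℝ) + 1) ^ (-1 / q) * (-1 / q)) * u ^ (-1 / q - 1)) •
        (if3Pdf p c q x0 (x0 + c * ((p : ℝ) + 1) ^ (-1 / q) * (u ^ (-1 / q) - 1)) *
          log (if3Pdf p c q x0 (x0 + c * ((p : ℝ) + 1) ^ (-1 / q) * (u ^ (-1 / q) - 1)))) =
      ((p : ℝ) + 1) * (1 - u) ^ p * ((log (q / c) + (q + 1) / q * log ((p : ℝ) + 1))
        + (q + 1) / q * log u + p * log (1 - u)) := by
  rw [smul_eq_mul, log_if3Pdf_comp_rpow p x0 hc hq hu, ← mul_assoc,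
    jacobian_mul_if3Pdf_comp_rpow p x0 hc hq hu.1]
  ring

end

theorem if3_entropy_general (p : ℕ) (c q x0 : ℝ) (hc : 0 < c) (hq : 0 < q)
    (f : ℝ → ℝ)
    (hf : ∀ x, f x =
      q / c * (((p : ℝ) + 1) ^ (-1 / q) + (x - x0) / c) ^ (-q - 1) *
        (1 - (1 + ((p : ℝ) + 1) ^ (1 / q) * ((x - x0) / c)) ^ (-q)) ^ p) :
    -∫ x in Set.Ioi x0, f x * Real.log (f x) =
      -Real.log (q / c) +
        (q + 1) / q *
          ((∑ k ∈ Finset.range (p + 1), (1 : ℝ) / (k + 1)) - Real.log ((p : ℝ) + 1)) +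
        (p : ℝ) / ((p : ℝ) + 1) := by
  obtain rfl : f = if3Pdf p c q x0 := funext hf
  have hr : -1 / q < 0 := div_neg_of_neg_of_pos (by norm_num) hq
  rw [integral_Ioi_eq_integral_Ioo_comp_rpow (k := c * ((p : ℝ) + 1) ^ (-1 / q)) (by positivity)
      hr x0,
    setIntegral_congr_fun measurableSet_Ioo fun u hu =>
      jacobian_smul_if3Pdf_mul_log_comp_rpow p x0 hc.ne' hq.ne' hu,
    ← integral_Ioc_eq_integral_Ioo, ← integral_of_le zero_le_one,
    integral_succ_mul_one_sub_pow_mul_log_add]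
  ring

/-- The differential entropy of the IF3 distribution with natural interpolation
parameter `p`. -/
theorem if3_entropy (p : ℕ) (c q x0 : ℝ) (hc : 0 < c) (hq : 0 < q) (hx0 : 0 ≤ x0)
    (f : ℝ → ℝ)
    (hf : ∀ x, f x =
      q / c * (((p : ℝ) + 1) ^ (-1 / q) + (x - x0) / c) ^ (-q - 1) *
        (1 - (1 + ((p : ℝ) + 1) ^ (1 / q) * ((x - x0) / c)) ^ (-q)) ^ p) :
    -∫ x in Set.Ioi x0, f x * Real.log (f x) =
      -Real.log (q / c) +
        (q + 1) / q *
          ((∑ k ∈ Finset.range (p + 1), (1 : ℝ) / (k + 1)) - Real.log ((p : ℝ) + 1)) +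
        (p : ℝ) / ((p : ℝ) + 1) :=
  if3_entropy_general p c q x0 hc hq f hf
end

section
/- Let b ∈ ℝ with b ≠ 0, c > 0, x0 ≥ 0, and let q be a natural number with q ≥ 1. Let f : ℝ → ℝ be a measurable probability density supported on [x0, ∞) (f ≥ 0 and ∫_{x0}^∞ f = 1) such that f·ln f is integrable on [x0, ∞), ∫_{x0}^∞ f(x)·ln((x-x0)/c) dx = -H_{q-1}/b, and ∫_{x0}^∞ f(x)·ln(1 + ((x-x0)/c)^b) dx = 1/q, where H_{q-1} = Σ_{k=1}^{q-1} 1/k. Then -∫_{x0}^∞ f(x)·ln(f(x)) dx ≤ -ln(|b|q/c) + ((b-1)/b)·H_{q-1} + (q+1)/q, i.e. the IF1 distribution maximizes differential entropy under these constraints. -/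
open MeasureTheory Real Set

/-!
By Gibbs' inequality, `∫ f log f ≥ ∫ f log g` for every positive density `g` with `∫ g = ∫ f`.
For the IF1 density `g`, `log g` is an affine combination of `1`, `log ((x - x0) / c)` and
`log (1 + ((x - x0) / c) ^ b)`, so the constraints on `f` determine `∫ f log g`, and `-∫ f log g`
is exactly the entropy of `g`. That `g` integrates to `1` follows from the substitutions
`t = (x - x0) / c` and `u = t ^ b`, which reduce it to `q ∫₀^∞ (1 + u) ^ (-(q + 1)) du = 1`.
-/

lemma Real.sub_le_mul_log_sub_mul_log {a b : ℝ} (ha : 0 ≤ a) (hb : 0 < b) :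
    a - b ≤ a * log a - a * log b := by
  rcases ha.eq_or_lt with rfl | ha
  · simpa using hb.le
  have h := mul_le_mul_of_nonneg_left (log_le_sub_one_of_pos (div_pos hb ha)) ha.le
  rw [log_div hb.ne' ha.ne', mul_sub, mul_sub, mul_div_cancel₀ _ ha.ne'] at h
  linarith

theorem integral_mul_log_le_integral_mul_log {α : Type*} [MeasurableSpace α] {μ : Measure α}
    {f g : α → ℝ} (hf : ∀ᵐ x ∂μ, 0 ≤ f x) (hg : ∀ᵐ x ∂μ, 0 < g x)
    (hf_int : Integrable f μ) (hg_int : Integrable g μ)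
    (hf_log : Integrable (fun x => f x * log (f x)) μ)
    (hfg_log : Integrable (fun x => f x * log (g x)) μ) (hfg : ∫ x, g x ∂μ ≤ ∫ x, f x ∂μ) :
    ∫ x, f x * log (g x) ∂μ ≤ ∫ x, f x * log (f x) ∂μ := by
  have h := integral_mono_ae (hf_int.sub hg_int) (hf_log.sub hfg_log) <| by
    filter_upwards [hf, hg] with x hfx hgx using sub_le_mul_log_sub_mul_log hfx hgx
  simp only [Pi.sub_apply] at h
  rw [integral_sub hf_int hg_int, integral_sub hf_log hfg_log] at h
  linarith

section Substitution

variable {E : Type*} [NormedAddCommGroup E] [NormedSpace ℝ E]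

lemma integral_Ioi_comp_sub (F : ℝ → E) (a d : ℝ) :
    ∫ x in Ioi (a + d), F (x - d) = ∫ y in Ioi a, F y := by
  rw [← integral_indicator measurableSet_Ioi, ← integral_indicator measurableSet_Ioi,
    ← integral_add_right_eq_self _ d]
  congr 1 with x
  simp only [indicator_apply, mem_Ioi, add_lt_add_iff_right, add_sub_cancel_right]

lemma integral_Ioi_comp_sub_div (F : ℝ → E) (x0 : ℝ) {c : ℝ} (hc : 0 < c) :
    ∫ x in Ioi x0, F ((x - x0) / c) = c • ∫ t in Ioi 0, F t := by
  have h := integral_Ioi_comp_sub (fun y => F (c⁻¹ * y)) 0 x0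
  simp only [zero_add] at h
  simp only [div_eq_inv_mul, h, integral_comp_mul_left_Ioi F 0 (inv_pos.2 hc), mul_zero, inv_inv]

end Substitution

lemma integral_Ioi_one_add_rpow {a : ℝ} (ha : a < -1) :
    ∫ u in Ioi (0 : ℝ), (1 + u) ^ a = -1 / (a + 1) := by
  have h := integral_Ioi_comp_sub (fun v : ℝ => v ^ a) 1 (-1)
  simp only [add_neg_cancel, sub_neg_eq_add, integral_Ioi_rpow_of_lt ha one_pos, one_rpow] at h
  simpa only [add_comm] using h

-- Only the values on `Ioi x0` matter: for `x < x0` the real powers take junk values.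
noncomputable def if1Density (b c q x0 x : ℝ) : ℝ :=
  |b| * q / c * ((x - x0) / c) ^ (b - 1) * (1 + ((x - x0) / c) ^ b) ^ (-(q + 1))

section IF1

variable {b c q x0 : ℝ}

lemma if1Density_pos (hb : b ≠ 0) (hc : 0 < c) (hq : 0 < q) {x : ℝ} (hx : x0 < x) :
    0 < if1Density b c q x0 x := by
  have ht : 0 < (x - x0) / c := div_pos (sub_pos.2 hx) hc
  have := abs_pos.2 hb
  unfold if1Density
  positivity

lemma log_if1Density (hb : b ≠ 0) (hc : 0 < c) (hq : 0 < q) {x : ℝ} (hx : x0 < x) :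
    log (if1Density b c q x0 x) = log (|b| * q / c) + (b - 1) * log ((x - x0) / c)
      - (q + 1) * log (1 + ((x - x0) / c) ^ b) := by
  have ht : 0 < (x - x0) / c := div_pos (sub_pos.2 hx) hc
  have := abs_pos.2 hb
  rw [if1Density, log_mul (by positivity) (by positivity), log_mul (by positivity) (by positivity),
    log_rpow ht, log_rpow (by positivity)]
  ring

lemma integral_if1Density (hb : b ≠ 0) (hc : 0 < c) (hq : 0 < q) :
    ∫ x in Ioi x0, if1Density b c q x0 x = 1 := by
  set Φ : ℝ → ℝ := fun t => |b| * t ^ (b - 1) * (1 + t ^ b) ^ (-(q + 1)) with hΦ_def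
  have hΦ : ∫ t in Ioi 0, Φ t = 1 / q := by
    have h := integral_comp_rpow_Ioi (fun u => (1 + u) ^ (-(q + 1))) hb
    simp only [smul_eq_mul] at h
    rw [h, integral_Ioi_one_add_rpow (by linarith)]
    ring
  calc ∫ x in Ioi x0, if1Density b c q x0 x
      = ∫ x in Ioi x0, q / c * Φ ((x - x0) / c) := by
        congr 1 with x; rw [if1Density, hΦ_def]; ring
    _ = 1 := by
        rw [integral_const_mul, integral_Ioi_comp_sub_div _ x0 hc, hΦ, smul_eq_mul]
        field_simp

lemma integrableOn_if1Density (hb : b ≠ 0) (hc : 0 < c) (hq : 0 < q) :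
    IntegrableOn (if1Density b c q x0) (Ioi x0) :=
  Integrable.of_integral_ne_zero (by rw [integral_if1Density hb hc hq]; exact one_ne_zero)

variable {f : ℝ → ℝ}

lemma mul_log_if1Density_eqOn (hb : b ≠ 0) (hc : 0 < c) (hq : 0 < q) :
    EqOn (fun x => f x * log (if1Density b c q x0 x))
      (fun x => log (|b| * q / c) * f x + (b - 1) * (f x * log ((x - x0) / c))
        - (q + 1) * (f x * log (1 + ((x - x0) / c) ^ b))) (Ioi x0) := by
  intro x hx
  simp only [log_if1Density hb hc hq hx]
  ring

lemma integrableOn_mul_log_if1Density (hb : b ≠ 0) (hc : 0 < c) (hq : 0 < q)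
    (hf : IntegrableOn f (Ioi x0))
    (hf_log₁ : IntegrableOn (fun x => f x * log ((x - x0) / c)) (Ioi x0))
    (hf_log₂ : IntegrableOn (fun x => f x * log (1 + ((x - x0) / c) ^ b)) (Ioi x0)) :
    IntegrableOn (fun x => f x * log (if1Density b c q x0 x)) (Ioi x0) := by
  refine IntegrableOn.congr_fun ?_ (mul_log_if1Density_eqOn hb hc hq).symm measurableSet_Ioi
  exact ((hf.const_mul _).add (hf_log₁.const_mul _)).sub (hf_log₂.const_mul _)

lemma setIntegral_mul_log_if1Density (hb : b ≠ 0) (hc : 0 < c) (hq : 0 < q)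
    (hf : IntegrableOn f (Ioi x0))
    (hf_log₁ : IntegrableOn (fun x => f x * log ((x - x0) / c)) (Ioi x0))
    (hf_log₂ : IntegrableOn (fun x => f x * log (1 + ((x - x0) / c) ^ b)) (Ioi x0)) :
    ∫ x in Ioi x0, f x * log (if1Density b c q x0 x) =
      log (|b| * q / c) * (∫ x in Ioi x0, f x)
        + (b - 1) * (∫ x in Ioi x0, f x * log ((x - x0) / c))
        - (q + 1) * ∫ x in Ioi x0, f x * log (1 + ((x - x0) / c) ^ b) := by
  have h₀ := hf.const_mul (log (|b| * q / c))
  have h₁ := hf_log₁.const_mul (b - 1)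
  have h₂ := hf_log₂.const_mul (q + 1)
  have h₀₁ : IntegrableOn (fun x => log (|b| * q / c) * f x
      + (b - 1) * (f x * log ((x - x0) / c))) (Ioi x0) := h₀.add h₁
  rw [setIntegral_congr_fun measurableSet_Ioi (mul_log_if1Density_eqOn hb hc hq),
    integral_sub h₀₁ h₂, integral_add h₀ h₁, integral_const_mul, integral_const_mul,
    integral_const_mul]

end IF1

theorem if1_max_entropy_general (b c x0 : ℝ) (q : ℕ) (hb : b ≠ 0) (hc : 0 < c) (hq : 1 ≤ q)
    (f : ℝ → ℝ)
    (hf_nonneg : ∀ x, 0 ≤ f x)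
    (hf_prob : ∫ x in Set.Ioi x0, f x = 1)
    (hf_logint : IntegrableOn (fun x => f x * Real.log (f x)) (Set.Ioi x0))
    (hc1_int : IntegrableOn (fun x => f x * Real.log ((x - x0) / c)) (Set.Ioi x0))
    (hc1 : ∫ x in Set.Ioi x0, f x * Real.log ((x - x0) / c) =
      -(∑ k ∈ Finset.range (q - 1), (1 : ℝ) / (k + 1)) / b)
    (hc2_int : IntegrableOn (fun x => f x * Real.log (1 + ((x - x0) / c) ^ b))
      (Set.Ioi x0))
    (hc2 : ∫ x in Set.Ioi x0, f x * Real.log (1 + ((x - x0) / c) ^ b) = 1 / (q : ℝ)) :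
    -∫ x in Set.Ioi x0, f x * Real.log (f x) ≤
      -Real.log (|b| * (q : ℝ) / c) +
        (b - 1) / b * (∑ k ∈ Finset.range (q - 1), (1 : ℝ) / (k + 1)) +
        ((q : ℝ) + 1) / (q : ℝ) := by
  set H := ∑ k ∈ Finset.range (q - 1), (1 : ℝ) / (k + 1)
  have hq' : (0 : ℝ) < q := by exact_mod_cast hq
  have hf_int : IntegrableOn f (Ioi x0) :=
    Integrable.of_integral_ne_zero (by rw [hf_prob]; exact one_ne_zero)
  have hgibbs := integral_mul_log_le_integral_mul_log (μ := volume.restrict (Ioi x0))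
    (ae_of_all _ hf_nonneg)
    (ae_restrict_of_forall_mem measurableSet_Ioi fun x hx => if1Density_pos hb hc hq' hx)
    hf_int (integrableOn_if1Density hb hc hq') hf_logint
    (integrableOn_mul_log_if1Density hb hc hq' hf_int hc1_int hc2_int)
    (by rw [integral_if1Density hb hc hq', hf_prob])
  rw [setIntegral_mul_log_if1Density hb hc hq' hf_int hc1_int hc2_int, hf_prob, hc1, hc2]
    at hgibbs
  calc -∫ x in Ioi x0, f x * log (f x)
      ≤ -(log (|b| * q / c) * 1 + (b - 1) * (-H / b) - (q + 1) * (1 / q)) := neg_le_neg hgibbs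
    _ = _ := by field_simp; ring

/-- The IF1 distribution maximizes the differential entropy among continuous
distributions supported on `[x0, ∞)` satisfying the two moment constraints. -/
theorem if1_max_entropy (b c x0 : ℝ) (q : ℕ) (hb : b ≠ 0) (hc : 0 < c) (hq : 1 ≤ q)
    (hx0 : 0 ≤ x0) (f : ℝ → ℝ)
    (hf_meas : Measurable f)
    (hf_nonneg : ∀ x, 0 ≤ f x)
    (hf_supp : ∀ x, x < x0 → f x = 0)
    (hf_prob : ∫ x in Set.Ioi x0, f x = 1)
    (hf_logint : IntegrableOn (fun x => f x * Real.log (f x)) (Set.Ioi x0))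
    (hc1_int : IntegrableOn (fun x => f x * Real.log ((x - x0) / c)) (Set.Ioi x0))
    (hc1 : ∫ x in Set.Ioi x0, f x * Real.log ((x - x0) / c) =
      -(∑ k ∈ Finset.range (q - 1), (1 : ℝ) / (k + 1)) / b)
    (hc2_int : IntegrableOn (fun x => f x * Real.log (1 + ((x - x0) / c) ^ b))
      (Set.Ioi x0))
    (hc2 : ∫ x in Set.Ioi x0, f x * Real.log (1 + ((x - x0) / c) ^ b) = 1 / (q : ℝ)) :
    -∫ x in Set.Ioi x0, f x * Real.log (f x) ≤
      -Real.log (|b| * (q : ℝ) / c) +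
        (b - 1) / b * (∑ k ∈ Finset.range (q - 1), (1 : ℝ) / (k + 1)) +
        ((q : ℝ) + 1) / (q : ℝ) :=
  if1_max_entropy_general b c x0 q hb hc hq f hf_nonneg hf_prob hf_logint hc1_int hc1 hc2_int hc2
end

section
/- Let b ∈ ℝ with b ≠ 0, c > 0, q > 0, x0 ≥ 0. Let f : ℝ → ℝ be a measurable probability density supported on [x0, ∞) (f ≥ 0 and ∫_{x0}^∞ f = 1) such that f·ln f is integrable on [x0, ∞), ∫_{x0}^∞ f(x)·ln((x-x0)/c) dx = γ_E/(b·q), and ∫_{x0}^∞ f(x)·((x-x0)/c)^(-b·q) dx = 1, where γ_E is the Euler–Mascheroni constant. Then -∫_{x0}^∞ f(x)·ln(f(x)) dx ≤ -ln(|b|q/c) + ((b·q+1)/(b·q))·γ_E + 1, i.e. the IF2 distribution maximizes differential entropy under these constraints. -/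
/-!
Gibbs' inequality: for a density `f` and a positive density `g` on the same set,
`-∫ f log f ≤ -∫ f log g`. For `g` the IF2 density, `log g` is an affine combination of `1`,
`log ((x - x0) / c)` and `((x - x0) / c) ^ (-(b q))`, so the cross entropy `-∫ f log g` is fixed
by the normalisation and the two constraints, and equals the entropy of the IF2 law.
The IF2 density integrates to `1` because it is the pushforward of the standard exponential
density under `t ↦ x0 + c t ^ (-1 / (b q))`.
-/

open MeasureTheory Real Set

theorem mul_log_le_mul_log_add_sub {x y : ℝ} (hx : 0 ≤ x) (hy : 0 < y) :
    x * log y ≤ x * log x + (y - x) := by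
  rcases hx.eq_or_lt with rfl | hx
  · simpa using hy.le
  · have h := mul_le_mul_of_nonneg_left (log_le_sub_one_of_pos (div_pos hy hx)) hx.le
    rw [log_div hy.ne' hx.ne', mul_sub, mul_sub_one, mul_div_cancel₀ _ hx.ne'] at h
    linarith

theorem neg_integral_mul_log_le {α : Type*} [MeasurableSpace α] {μ : Measure α} {f g : α → ℝ}
    (hf : ∀ᵐ x ∂μ, 0 ≤ f x) (hg : ∀ᵐ x ∂μ, 0 < g x) (hf_int : Integrable f μ)
    (hg_int : Integrable g μ) (hflogf : Integrable (fun x => f x * log (f x)) μ)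
    (hflogg : Integrable (fun x => f x * log (g x)) μ) :
    -∫ x, f x * log (f x) ∂μ ≤ -∫ x, f x * log (g x) ∂μ + (∫ x, g x ∂μ - ∫ x, f x ∂μ) := by
  have hgf_int : Integrable (fun x => g x - f x) μ := hg_int.sub hf_int
  have h : ∫ x, f x * log (g x) ∂μ ≤ ∫ x, f x * log (f x) + (g x - f x) ∂μ :=
    integral_mono_ae hflogg (hflogf.add hgf_int) <| by
      filter_upwards [hf, hg] with x hfx hgx using mul_log_le_mul_log_add_sub hfx hgx
  rw [integral_add hflogf hgf_int, integral_sub hg_int hf_int] at h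
  linarith

section AffineSubstitution

variable {E : Type*} [NormedAddCommGroup E] [NormedSpace ℝ E] {c : ℝ}

theorem hasDerivAt_sub_div (x0 c x : ℝ) : HasDerivAt (fun x => (x - x0) / c) c⁻¹ x := by
  simpa [div_eq_mul_inv] using ((hasDerivAt_id x).sub_const x0).div_const c

theorem injective_sub_div (x0 : ℝ) (hc : c ≠ 0) : Function.Injective fun x : ℝ => (x - x0) / c :=
  fun x y h => by simpa [hc] using h

theorem image_sub_div_Ioi (x0 : ℝ) (hc : 0 < c) : (fun x => (x - x0) / c) '' Ioi x0 = Ioi 0 := by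
  ext y
  constructor
  · rintro ⟨x, hx, rfl⟩
    exact div_pos (sub_pos.2 hx) hc
  · intro hy
    refine ⟨x0 + c * y, ?_, ?_⟩
    · simpa using mul_pos hc hy
    · field_simp; ring

theorem integral_comp_sub_div_Ioi (g : ℝ → E) (x0 : ℝ) (hc : 0 < c) :
    ∫ x in Ioi x0, c⁻¹ • g ((x - x0) / c) = ∫ y in Ioi 0, g y := by
  rw [← image_sub_div_Ioi x0 hc, integral_image_eq_integral_abs_deriv_smul measurableSet_Ioi
    (fun x _ => (hasDerivAt_sub_div x0 c x).hasDerivWithinAt) (injective_sub_div x0 hc.ne').injOn,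
    abs_of_pos (inv_pos.2 hc)]

theorem integrableOn_Ioi_comp_sub_div_iff (g : ℝ → E) (x0 : ℝ) (hc : 0 < c) :
    IntegrableOn (fun x => c⁻¹ • g ((x - x0) / c)) (Ioi x0) ↔ IntegrableOn g (Ioi 0) := by
  rw [← image_sub_div_Ioi x0 hc, integrableOn_image_iff_integrableOn_abs_deriv_smul
    measurableSet_Ioi (fun x _ => (hasDerivAt_sub_div x0 c x).hasDerivWithinAt)
    (injective_sub_div x0 hc.ne').injOn, abs_of_pos (inv_pos.2 hc)]

end AffineSubstitution

section IF2

variable {p c x0 x : ℝ}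

/-- The IF2 density with `p = b * q`; it depends on `b` and `q` only through this product. -/
noncomputable def if2Pdf (p c x0 x : ℝ) : ℝ :=
  |p| / c * ((x - x0) / c) ^ (-p - 1) * exp (-((x - x0) / c) ^ (-p))

theorem if2Pdf_pos (hp : p ≠ 0) (hc : 0 < c) (hx : x0 < x) : 0 < if2Pdf p c x0 x := by
  have hy : 0 < (x - x0) / c := div_pos (sub_pos.2 hx) hc
  unfold if2Pdf
  positivity

theorem log_if2Pdf (hp : p ≠ 0) (hc : 0 < c) (hx : x0 < x) :
    log (if2Pdf p c x0 x) =
      log (|p| / c) + (-p - 1) * log ((x - x0) / c) - ((x - x0) / c) ^ (-p) := by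
  have hy : 0 < (x - x0) / c := div_pos (sub_pos.2 hx) hc
  rw [if2Pdf, log_mul (by positivity) (exp_pos _).ne', log_mul (by positivity) (by positivity),
    log_exp, log_rpow hy]
  ring

theorem if2Pdf_eq_smul (p c x0 x : ℝ) :
    if2Pdf p c x0 x =
      c⁻¹ • ((|-p| * ((x - x0) / c) ^ (-p - 1)) • exp (-((x - x0) / c) ^ (-p))) := by
  rw [if2Pdf, abs_neg, smul_eq_mul, smul_eq_mul]
  ring

theorem integrableOn_if2Pdf (hp : p ≠ 0) (hc : 0 < c) : IntegrableOn (if2Pdf p c x0) (Ioi x0) := by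
  rw [funext (if2Pdf_eq_smul p c x0)]
  exact (integrableOn_Ioi_comp_sub_div_iff _ x0 hc).2 <|
    (integrableOn_Ioi_comp_rpow_iff (fun y => exp (-y)) (neg_ne_zero.2 hp)).2
      (integrableOn_exp_neg_Ioi 0)

theorem integral_if2Pdf (hp : p ≠ 0) (hc : 0 < c) : ∫ x in Ioi x0, if2Pdf p c x0 x = 1 := by
  simp_rw [if2Pdf_eq_smul p c x0]
  rw [integral_comp_sub_div_Ioi (fun y => (|-p| * y ^ (-p - 1)) • exp (-y ^ (-p))) x0 hc,
    integral_comp_rpow_Ioi (fun y => exp (-y)) (neg_ne_zero.2 hp)]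
  exact integral_exp_neg_Ioi_zero

theorem eqOn_mul_log_if2Pdf (hp : p ≠ 0) (hc : 0 < c) (f : ℝ → ℝ) :
    EqOn (fun x => f x * log (if2Pdf p c x0 x))
      (fun x => log (|p| / c) * f x + (-p - 1) * (f x * log ((x - x0) / c)) -
        f x * ((x - x0) / c) ^ (-p)) (Ioi x0) := fun x hx => by
  dsimp only
  rw [log_if2Pdf hp hc hx]
  ring

theorem integrableOn_mul_log_if2Pdf {f : ℝ → ℝ} (hp : p ≠ 0) (hc : 0 < c)
    (hf : IntegrableOn f (Ioi x0))
    (hlog : IntegrableOn (fun x => f x * log ((x - x0) / c)) (Ioi x0))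
    (hpow : IntegrableOn (fun x => f x * ((x - x0) / c) ^ (-p)) (Ioi x0)) :
    IntegrableOn (fun x => f x * log (if2Pdf p c x0 x)) (Ioi x0) := by
  have h : IntegrableOn (fun x => log (|p| / c) * f x + (-p - 1) * (f x * log ((x - x0) / c)) -
      f x * ((x - x0) / c) ^ (-p)) (Ioi x0) := ((hf.const_mul _).add (hlog.const_mul _)).sub hpow
  exact h.congr_fun (eqOn_mul_log_if2Pdf hp hc f).symm measurableSet_Ioi

theorem integral_mul_log_if2Pdf {f : ℝ → ℝ} (hp : p ≠ 0) (hc : 0 < c)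
    (hf : IntegrableOn f (Ioi x0))
    (hlog : IntegrableOn (fun x => f x * log ((x - x0) / c)) (Ioi x0))
    (hpow : IntegrableOn (fun x => f x * ((x - x0) / c) ^ (-p)) (Ioi x0)) :
    ∫ x in Ioi x0, f x * log (if2Pdf p c x0 x) =
      log (|p| / c) * (∫ x in Ioi x0, f x) +
        (-p - 1) * (∫ x in Ioi x0, f x * log ((x - x0) / c)) -
          ∫ x in Ioi x0, f x * ((x - x0) / c) ^ (-p) := by
  have h : IntegrableOn (fun x => log (|p| / c) * f x + (-p - 1) * (f x * log ((x - x0) / c)))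
      (Ioi x0) := (hf.const_mul _).add (hlog.const_mul _)
  rw [setIntegral_congr_fun measurableSet_Ioi (eqOn_mul_log_if2Pdf hp hc f), integral_sub h hpow,
    integral_add (hf.const_mul _) (hlog.const_mul _), integral_const_mul, integral_const_mul]

end IF2

theorem if2_max_entropy_general (b c q x0 : ℝ) (hb : b ≠ 0) (hc : 0 < c) (hq : 0 < q)
    (f : ℝ → ℝ)
    (hf_nonneg : ∀ x, 0 ≤ f x)
    (hf_prob : ∫ x in Set.Ioi x0, f x = 1)
    (hf_logint : IntegrableOn (fun x => f x * Real.log (f x)) (Set.Ioi x0))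
    (hc1_int : IntegrableOn (fun x => f x * Real.log ((x - x0) / c)) (Set.Ioi x0))
    (hc1 : ∫ x in Set.Ioi x0, f x * Real.log ((x - x0) / c) =
      Real.eulerMascheroniConstant / (b * q))
    (hc2_int : IntegrableOn (fun x => f x * ((x - x0) / c) ^ (-(b * q))) (Set.Ioi x0))
    (hc2 : ∫ x in Set.Ioi x0, f x * ((x - x0) / c) ^ (-(b * q)) = 1) :
    -∫ x in Set.Ioi x0, f x * Real.log (f x) ≤
      -Real.log (|b| * q / c) +
        (b * q + 1) / (b * q) * Real.eulerMascheroniConstant + 1 := by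
  have hp : b * q ≠ 0 := mul_ne_zero hb hq.ne'
  have hf_int : IntegrableOn f (Ioi x0) :=
    Integrable.of_integral_ne_zero (by rw [hf_prob]; exact one_ne_zero)
  have hgibbs := neg_integral_mul_log_le
    (ae_restrict_of_forall_mem measurableSet_Ioi fun x _ => hf_nonneg x)
    (ae_restrict_of_forall_mem measurableSet_Ioi fun _ hx => if2Pdf_pos hp hc hx)
    hf_int (integrableOn_if2Pdf hp hc) hf_logint
    (integrableOn_mul_log_if2Pdf hp hc hf_int hc1_int hc2_int)
  rw [integral_mul_log_if2Pdf hp hc hf_int hc1_int hc2_int, integral_if2Pdf hp hc, hf_prob, hc1,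
    hc2, abs_mul, abs_of_pos hq] at hgibbs
  refine hgibbs.trans_eq ?_
  field_simp
  ring

/-- The IF2 distribution maximizes the differential entropy among continuous
distributions supported on `[x0, ∞)` satisfying the two moment constraints. -/
theorem if2_max_entropy (b c q x0 : ℝ) (hb : b ≠ 0) (hc : 0 < c) (hq : 0 < q)
    (hx0 : 0 ≤ x0) (f : ℝ → ℝ)
    (hf_meas : Measurable f)
    (hf_nonneg : ∀ x, 0 ≤ f x)
    (hf_supp : ∀ x, x < x0 → f x = 0)
    (hf_prob : ∫ x in Set.Ioi x0, f x = 1)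
    (hf_logint : IntegrableOn (fun x => f x * Real.log (f x)) (Set.Ioi x0))
    (hc1_int : IntegrableOn (fun x => f x * Real.log ((x - x0) / c)) (Set.Ioi x0))
    (hc1 : ∫ x in Set.Ioi x0, f x * Real.log ((x - x0) / c) =
      Real.eulerMascheroniConstant / (b * q))
    (hc2_int : IntegrableOn (fun x => f x * ((x - x0) / c) ^ (-(b * q))) (Set.Ioi x0))
    (hc2 : ∫ x in Set.Ioi x0, f x * ((x - x0) / c) ^ (-(b * q)) = 1) :
    -∫ x in Set.Ioi x0, f x * Real.log (f x) ≤
      -Real.log (|b| * q / c) +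
        (b * q + 1) / (b * q) * Real.eulerMascheroniConstant + 1 :=
  if2_max_entropy_general b c q x0 hb hc hq f hf_nonneg hf_prob hf_logint hc1_int hc1 hc2_int hc2
end

section
/- Let q > 0 and let s be a real number with s < q. Then the sequence of integrals n ↦ ∫_0^{n+1} (z^(-1/q) - (n+1)^(-1/q))^s · (1 - z/(n+1))^n dz (over natural numbers n) converges, as n → ∞, to Γ(1 - s/q). -/
/-!
With `N = n + 1` and `c = (z / N) ^ (1 / q)` the integrand is
`z ^ (-s/q) (1 - c) ^ s (1 - c ^ q) ^ n`. Since `1 - c ^ q ≤ max 1 q * (1 - c)` on `[0, 1]`,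
choosing `m ≥ -s` makes `(1 - c) ^ s (1 - c ^ q) ^ m ≤ (max 1 q) ^ m`, which absorbs the
singularity at `z = N` when `s < 0`, and for `n ≥ 2m + 1` the remaining factor
`(1 - z / N) ^ (n - m)` is at most `exp (-z / 2)`. Extended by zero beyond `N`, the integrands
are thus dominated by a multiple of `z ^ (-s/q) exp (-z / 2)`, integrable on `(0, ∞)` because
`s < q`; they converge pointwise to `exp (-z) z ^ (-s/q)`, whose integral is `Γ(1 - s/q)`.
-/

open MeasureTheory Real Filter Set Topology

noncomputable def if2MomentIntegrand (q s : ℝ) (n : ℕ) (z : ℝ) : ℝ :=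
  (z ^ (-1 / q) - ((n : ℝ) + 1) ^ (-1 / q)) ^ s * (1 - z / ((n : ℝ) + 1)) ^ n

theorem one_sub_rpow_le_max_mul_one_sub {c q : ℝ} (hc0 : 0 ≤ c) (hc1 : c ≤ 1) :
    1 - c ^ q ≤ max 1 q * (1 - c) := by
  rcases le_total q 1 with hq1 | hq1
  · have hcq : c ≤ c ^ q := by
      rcases hc0.eq_or_lt with rfl | hc0
      · exact rpow_nonneg le_rfl q
      · simpa using rpow_le_rpow_of_exponent_ge hc0 hc1 hq1
    nlinarith [le_max_left 1 q]
  · have bernoulli := one_add_mul_self_le_rpow_one_add (by linarith : (-1 : ℝ) ≤ c - 1) hq1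
    rw [add_sub_cancel] at bernoulli
    nlinarith [le_max_right 1 q]

theorem one_sub_rpow_mul_one_sub_rpow_pow_le {c q s : ℝ} {m : ℕ} (hq : 0 ≤ q) (hc0 : 0 ≤ c)
    (hc1 : c < 1) (hm : -s ≤ m) : (1 - c) ^ s * (1 - c ^ q) ^ m ≤ max 1 q ^ m := by
  have hpos : 0 < 1 - c := by linarith
  calc (1 - c) ^ s * (1 - c ^ q) ^ m
      ≤ (1 - c) ^ s * (max 1 q * (1 - c)) ^ m := by
        gcongr
        · exact sub_nonneg.mpr (rpow_le_one hc0 hc1.le hq)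
        · exact one_sub_rpow_le_max_mul_one_sub hc0 hc1.le
    _ = max 1 q ^ m * (1 - c) ^ (s + m) := by
        rw [rpow_add hpos, rpow_natCast, mul_pow]; ring
    _ ≤ max 1 q ^ m * 1 := by
        gcongr
        exact rpow_le_one hpos.le (by linarith) (by linarith)
    _ = max 1 q ^ m := mul_one _

theorem one_sub_pow_le_exp_neg_mul {x : ℝ} (hx : x ≤ 1) (k : ℕ) :
    (1 - x) ^ k ≤ exp (-(k * x)) := by
  calc (1 - x) ^ k ≤ exp (-x) ^ k := pow_le_pow_left₀ (by linarith) (one_sub_le_exp_neg x) k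
    _ = exp (-(k * x)) := by rw [← exp_nat_mul, mul_neg]

theorem rpow_neg_inv_sub_rpow_neg_inv {z N : ℝ} (q : ℝ) (hz : 0 < z) (hN : 0 < N) :
    z ^ (-1 / q) - N ^ (-1 / q) = z ^ (-1 / q) * (1 - (z / N) ^ (1 / q)) := by
  rw [mul_one_sub, div_rpow hz.le hN.le, mul_div_assoc', ← rpow_add hz, neg_div,
    neg_add_cancel, rpow_zero, rpow_neg hN.le, one_div, one_div]

theorem if2MomentIntegrand_nonneg {q s z : ℝ} {n : ℕ} (hq : 0 < q) (hz : 0 < z)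
    (hzn : z ≤ n + 1) : 0 ≤ if2MomentIntegrand q s n z := by
  have hN : (0 : ℝ) < n + 1 := by positivity
  have hbase : ((n : ℝ) + 1) ^ (-1 / q) ≤ z ^ (-1 / q) :=
    rpow_le_rpow_of_nonpos hz hzn (div_nonpos_of_nonpos_of_nonneg (by norm_num) hq.le)
  have hfactor : 0 ≤ 1 - z / ((n : ℝ) + 1) := sub_nonneg.mpr ((div_le_one hN).mpr hzn)
  exact mul_nonneg (rpow_nonneg (sub_nonneg.mpr hbase) s) (pow_nonneg hfactor n)

theorem if2MomentIntegrand_le {q s z : ℝ} {m n : ℕ} (hq : 0 < q) (hm : -s ≤ m)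
    (hn : 2 * m + 1 ≤ n) (hz : 0 < z) (hzn : z ≤ n + 1) :
    if2MomentIntegrand q s n z ≤ max 1 q ^ m * (z ^ (-(s / q)) * exp (-(1 / 2) * z)) := by
  set N : ℝ := n + 1 with hN_def
  have hN : 0 < N := by positivity
  obtain rfl | hzN := hzn.eq_or_lt
  · rw [if2MomentIntegrand, div_self hN.ne', sub_self, sub_self, zero_pow (by omega), mul_zero]
    positivity
  set c := (z / N) ^ (1 / q) with hc_def
  have hzN' : z / N < 1 := (div_lt_one hN).mpr hzN
  have hc0 : 0 ≤ c := rpow_nonneg (div_pos hz hN).le _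
  have hc1 : c < 1 := rpow_lt_one (div_pos hz hN).le hzN' (by positivity)
  have hcq : c ^ q = z / N := by
    rw [hc_def, ← rpow_mul (div_pos hz hN).le, one_div_mul_cancel hq.ne', rpow_one]
  have hsplit : if2MomentIntegrand q s n z =
      z ^ (-(s / q)) * ((1 - c) ^ s * (1 - c ^ q) ^ m) * (1 - z / N) ^ (n - m) := by
    rw [if2MomentIntegrand, ← hN_def, rpow_neg_inv_sub_rpow_neg_inv q hz hN, ← hc_def,
      mul_rpow (rpow_nonneg hz.le _) (by linarith), ← rpow_mul hz.le, hcq,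
      ← Nat.add_sub_cancel' (by omega : m ≤ n), pow_add, Nat.add_sub_cancel_left]
    ring_nf
  have htail : (1 - z / N) ^ (n - m) ≤ exp (-(1 / 2) * z) := by
    refine (one_sub_pow_le_exp_neg_mul hzN'.le _).trans (exp_le_exp.mpr ?_)
    have hnm : N ≤ 2 * ((n - m : ℕ) : ℝ) := by
      rw [hN_def]; exact_mod_cast (by omega : n + 1 ≤ 2 * (n - m))
    rw [neg_mul, neg_le_neg_iff, mul_div_assoc', le_div_iff₀ hN]
    nlinarith
  rw [hsplit]
  calc _ ≤ z ^ (-(s / q)) * max 1 q ^ m * exp (-(1 / 2) * z) := by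
        gcongr
        exact one_sub_rpow_mul_one_sub_rpow_pow_le hq.le hc0 hc1 hm
    _ = _ := by ring

theorem tendsto_one_sub_div_add_one_pow (z : ℝ) :
    Tendsto (fun n : ℕ => (1 - z / ((n : ℝ) + 1)) ^ n) atTop (𝓝 (exp (-z))) := by
  have hsucc :
      Tendsto (fun n : ℕ => (1 - z / ((n : ℝ) + 1)) ^ (n + 1)) atTop (𝓝 (exp (-z))) := by
    refine ((tendsto_one_add_div_pow_exp (-z)).comp (tendsto_add_atTop_nat 1)).congr fun n => ?_
    simp [neg_div, sub_eq_add_neg]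
  have hbase : Tendsto (fun n : ℕ => 1 - z / ((n : ℝ) + 1)) atTop (𝓝 1) := by
    simpa using tendsto_const_nhds.sub (tendsto_const_div_atTop_nhds_zero_nat z |>.comp
      (tendsto_add_atTop_nat 1))
  refine (div_one (exp (-z)) ▸ hsucc.div hbase one_ne_zero).congr' ?_
  filter_upwards [eventually_gt_atTop ⌈z⌉₊] with n hn
  have hzn : z < (n : ℝ) + 1 := (Nat.lt_of_ceil_lt hn).trans (lt_add_one _)
  have hpos : 0 < 1 - z / ((n : ℝ) + 1) := sub_pos.mpr ((div_lt_one (by positivity)).mpr hzn)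
  rw [Pi.div_apply, pow_succ, mul_div_cancel_right₀ _ hpos.ne']

theorem tendsto_if2MomentIntegrand {q z : ℝ} (s : ℝ) (hq : 0 < q) (hz : 0 < z) :
    Tendsto (fun n => if2MomentIntegrand q s n z) atTop (𝓝 (exp (-z) * z ^ (-(s / q)))) := by
  have hpow : Tendsto (fun n : ℕ => ((n : ℝ) + 1) ^ (-1 / q)) atTop (𝓝 0) := by
    have := (tendsto_rpow_neg_atTop (one_div_pos.mpr hq)).comp
      (tendsto_atTop_add_const_right _ 1 tendsto_natCast_atTop_atTop)
    simpa [neg_div, Function.comp_def] using this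
  have hbase : Tendsto (fun n : ℕ => (z ^ (-1 / q) - ((n : ℝ) + 1) ^ (-1 / q)) ^ s) atTop
      (𝓝 (z ^ (-(s / q)))) := by
    have := (tendsto_const_nhds.sub hpow).rpow_const (p := s)
      (Or.inl (sub_zero (z ^ (-1 / q)) ▸ (rpow_pos_of_pos hz _).ne'))
    rwa [sub_zero, ← rpow_mul hz.le, div_mul_eq_mul_div, neg_one_mul, neg_div q s] at this
  rw [mul_comm]
  exact hbase.mul (tendsto_one_sub_div_add_one_pow z)

theorem norm_indicator_if2MomentIntegrand_le {q s z : ℝ} {m n : ℕ} (hq : 0 < q) (hm : -s ≤ m)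
    (hn : 2 * m + 1 ≤ n) (hz : 0 < z) :
    ‖(Ioc 0 ((n : ℝ) + 1)).indicator (if2MomentIntegrand q s n) z‖ ≤
      max 1 q ^ m * (z ^ (-(s / q)) * exp (-(1 / 2) * z)) := by
  by_cases hzn : z ≤ n + 1
  · rw [indicator_of_mem (show z ∈ Ioc 0 ((n : ℝ) + 1) from ⟨hz, hzn⟩),
      norm_of_nonneg (if2MomentIntegrand_nonneg hq hz hzn)]
    exact if2MomentIntegrand_le hq hm hn hz hzn
  · rw [indicator_of_notMem fun h => hzn h.2, norm_zero]
    positivity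

theorem tendsto_indicator_if2MomentIntegrand {q z : ℝ} (s : ℝ) (hq : 0 < q) (hz : 0 < z) :
    Tendsto (fun n : ℕ => (Ioc 0 ((n : ℝ) + 1)).indicator (if2MomentIntegrand q s n) z) atTop
      (𝓝 (exp (-z) * z ^ (-(s / q)))) := by
  refine (tendsto_if2MomentIntegrand s hq hz).congr' ?_
  filter_upwards [eventually_ge_atTop ⌈z⌉₊] with n hn
  have hzn : z ≤ n + 1 := (Nat.ceil_le.mp hn).trans (le_add_of_nonneg_right zero_le_one)
  exact (indicator_of_mem (show z ∈ Ioc 0 ((n : ℝ) + 1) from ⟨hz, hzn⟩) _).symm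

theorem intervalIntegral_zero_eq_integral_Ioi_indicator {E : Type*} [NormedAddCommGroup E]
    [NormedSpace ℝ E] (f : ℝ → E) {b : ℝ} (hb : 0 ≤ b) :
    ∫ z in (0 : ℝ)..b, f z = ∫ z in Ioi 0, (Ioc 0 b).indicator f z := by
  rw [intervalIntegral.integral_of_le hb, integral_indicator measurableSet_Ioc,
    Measure.restrict_restrict_of_subset Ioc_subset_Ioi_self]

/-- The limiting integral arising in the moments of the IF2 distribution,
obtained by dominated convergence. -/
theorem if2_moment_limit (q s : ℝ) (hq : 0 < q) (hs : s < q) :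
    Tendsto
      (fun n : ℕ =>
        ∫ z in (0:ℝ)..((n : ℝ) + 1),
          (z ^ (-1 / q) - ((n : ℝ) + 1) ^ (-1 / q)) ^ s * (1 - z / ((n : ℝ) + 1)) ^ n)
      atTop (nhds (Real.Gamma (1 - s / q))) := by
  obtain ⟨m, hm⟩ : ∃ m : ℕ, -s ≤ m := exists_nat_ge (-s)
  have hsq : -1 < -(s / q) := by rw [neg_lt_neg_iff]; exact (div_lt_one hq).mpr hs
  have hdom : IntegrableOn (fun z => max 1 q ^ m * (z ^ (-(s / q)) * exp (-(1 / 2) * z)))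
      (Ioi 0) := by
    have := integrableOn_rpow_mul_exp_neg_mul_rpow hsq one_pos one_half_pos
    simp only [rpow_one] at this
    exact this.const_mul _
  have hmeas (n : ℕ) :
      Measurable ((Ioc 0 ((n : ℝ) + 1)).indicator (if2MomentIntegrand q s n)) :=
    Measurable.indicator (by unfold if2MomentIntegrand; fun_prop) measurableSet_Ioc
  have hbound : ∀ᶠ n : ℕ in atTop, ∀ᵐ z ∂volume.restrict (Ioi 0),
      ‖(Ioc 0 ((n : ℝ) + 1)).indicator (if2MomentIntegrand q s n) z‖ ≤
        max 1 q ^ m * (z ^ (-(s / q)) * exp (-(1 / 2) * z)) := by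
    filter_upwards [eventually_ge_atTop (2 * m + 1)] with n hn
    filter_upwards [ae_restrict_mem measurableSet_Ioi] with z hz
    exact norm_indicator_if2MomentIntegrand_le hq hm hn hz
  have hpointwise := (ae_restrict_iff' measurableSet_Ioi).mpr
    (ae_of_all volume fun z (hz : 0 < z) => tendsto_indicator_if2MomentIntegrand s hq hz)
  rw [Gamma_eq_integral (by linarith), sub_sub_cancel_left]
  refine (tendsto_integral_filter_of_dominated_convergence _
    (.of_forall fun n => (hmeas n).aestronglyMeasurable) hbound hdom hpointwise).congr fun n => ?_
  exact (intervalIntegral_zero_eq_integral_Ioi_indicator _ (by positivity)).symm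
end

section
/- For every natural number q ≥ 1, ∫_0^1 ln(t^(-1/q) - 1) dt = -H_{q-1}, where H_{q-1} = Σ_{k=1}^{q-1} 1/k (with H_0 = 0). -/
/-!
With `u = t ^ (1 / q)`, the integrand is `log (1 - u) - (1 / q) * log t`, and `∫₀¹ log t = -1`.
In the variable `u` (so `t = u ^ q`), a primitive of `q u^(q-1) log (1 - u)` is
`(u ^ q - 1) log (1 - u) - ∑_{k<q} u^(k+1)/(k+1)`, because `(u ^ q - 1) / (u - 1) = ∑_{k<q} u^k`;
it vanishes at `u = 0` and equals `-H_q` at `u = 1`. Hence the integral is `-H_q + 1/q = -H_{q-1}`.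
Integrability comes for free: `log (1 - u) ≤ 0`, and a function with a monotone continuous
primitive is integrable.
-/

open MeasureTheory Real Set

noncomputable def powLogPrimitive (n : ℕ) (u : ℝ) : ℝ :=
  (u ^ n - 1) * log (1 - u) - ∑ k ∈ Finset.range n, u ^ (k + 1) / (k + 1)

lemma hasDerivAt_powLogPrimitive (n : ℕ) {u : ℝ} (hu : u ≠ 1) :
    HasDerivAt (powLogPrimitive n) (n * u ^ (n - 1) * log (1 - u)) u := by
  have h1u : 1 - u ≠ 0 := sub_ne_zero.2 hu.symm
  have hlog : HasDerivAt (fun u => log (1 - u)) (-1 / (1 - u)) u := by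
    simpa using ((hasDerivAt_id u).const_sub 1).log h1u
  have hsum : HasDerivAt (fun u : ℝ => ∑ k ∈ Finset.range n, u ^ (k + 1) / (k + 1))
      (∑ k ∈ Finset.range n, u ^ k) u := by
    refine HasDerivAt.fun_sum fun k _ => ?_
    refine ((hasDerivAt_pow (k + 1) u).div_const ((k : ℝ) + 1)).congr_deriv ?_
    rw [Nat.add_sub_cancel]
    push_cast
    field_simp
  refine ((((hasDerivAt_pow n u).sub_const 1).mul hlog).sub hsum).congr_deriv ?_
  field_simp
  linear_combination geom_sum_mul u n

/-- This form shows continuity at `u = 1`, where `log (1 - u)` takes the junk value `log 0 = 0`. -/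
lemma powLogPrimitive_eq (n : ℕ) (u : ℝ) :
    powLogPrimitive n u = -(∑ k ∈ Finset.range n, u ^ k) * ((1 - u) * log (1 - u)) -
      ∑ k ∈ Finset.range n, u ^ (k + 1) / (k + 1) := by
  rw [powLogPrimitive, ← geom_sum_mul]
  ring

lemma continuous_powLogPrimitive (n : ℕ) : Continuous (powLogPrimitive n) := by
  rw [funext (powLogPrimitive_eq n)]
  have hmul_log : Continuous fun u : ℝ => (1 - u) * log (1 - u) :=
    continuous_mul_log.comp (continuous_const.sub continuous_id)
  fun_prop

lemma log_rpow_neg_sub_one {x : ℝ} (hx : 0 < x) (c : ℝ) :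
    log (x ^ (-c) - 1) = log (1 - x ^ c) - c * log x := by
  have hpos : 0 < x ^ c := rpow_pos_of_pos hx c
  rw [rpow_neg hx.le, ← log_rpow hx]
  rcases eq_or_ne (1 - x ^ c) 0 with h | h
  · rw [← sub_eq_zero.1 h]
    simp
  · rw [← log_div h hpos.ne']
    congr 1
    field_simp

variable {q : ℕ}

lemma hasDerivAt_powLogPrimitive_rpow_inv (hq : q ≠ 0) {t : ℝ} (ht0 : 0 < t) (ht1 : t ≠ 1) :
    HasDerivAt (fun t => powLogPrimitive q (t ^ (q : ℝ)⁻¹)) (log (1 - t ^ (q : ℝ)⁻¹)) t := by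
  set u := t ^ (q : ℝ)⁻¹
  have hu : u ^ q = t := rpow_inv_natCast_pow ht0.le hq
  have hu1 : u ≠ 1 := fun h => ht1 (by rw [← hu, h, one_pow])
  refine ((hasDerivAt_powLogPrimitive q hu1).comp t
    (hasDerivAt_rpow_const (Or.inl ht0.ne'))).congr_deriv ?_
  rw [rpow_sub_one ht0.ne']
  have hpow : u ^ (q - 1) * u = t := by rw [pow_sub_one_mul hq, hu]
  rw [show t ^ (q : ℝ)⁻¹ = u from rfl]
  field_simp
  linear_combination log (1 - u) * hpow

lemma continuous_powLogPrimitive_rpow_inv (q : ℕ) :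
    Continuous fun t : ℝ => powLogPrimitive q (t ^ (q : ℝ)⁻¹) :=
  (continuous_powLogPrimitive q).comp (continuous_rpow_const (by positivity))

lemma intervalIntegrable_log_one_sub_rpow_inv (hq : q ≠ 0) :
    IntervalIntegrable (fun t => log (1 - t ^ (q : ℝ)⁻¹)) volume 0 1 := by
  have hnonpos : ∀ t ∈ Ioo (0 : ℝ) 1, log (1 - t ^ (q : ℝ)⁻¹) ≤ 0 := fun t ht =>
    log_nonpos (sub_nonneg.2 (rpow_le_one ht.1.le ht.2.le (by positivity)))
      (sub_le_self _ (rpow_nonneg ht.1.le _))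
  have hneg := intervalIntegral.integrableOn_deriv_of_nonneg
    (continuous_powLogPrimitive_rpow_inv q).neg.continuousOn
    (fun t ht => (hasDerivAt_powLogPrimitive_rpow_inv hq ht.1 ht.2.ne).neg)
    (fun t ht => neg_nonneg.2 (hnonpos t ht))
  rw [intervalIntegrable_iff_integrableOn_Ioc_of_le zero_le_one]
  simpa using hneg.neg

lemma integral_log_one_sub_rpow_inv (hq : q ≠ 0) :
    ∫ t in (0 : ℝ)..1, log (1 - t ^ (q : ℝ)⁻¹) = -∑ k ∈ Finset.range q, (1 : ℝ) / (k + 1) := by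
  rw [intervalIntegral.integral_eq_sub_of_hasDerivAt_of_le zero_le_one
    (continuous_powLogPrimitive_rpow_inv q).continuousOn
    (fun t ht => hasDerivAt_powLogPrimitive_rpow_inv hq ht.1 ht.2.ne)
    (intervalIntegrable_log_one_sub_rpow_inv hq)]
  simp [powLogPrimitive, zero_rpow (inv_ne_zero (Nat.cast_ne_zero.2 hq)), hq]

/-- `∫₀¹ ln(t^{-1/q} - 1) dt = -H_{q-1}` for a positive integer `q`. -/
theorem integral_log_rpow_sub_one (q : ℕ) (hq : 1 ≤ q) :
    ∫ t in (0:ℝ)..1, Real.log (t ^ (-1 / (q : ℝ)) - 1) =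
      -∑ k ∈ Finset.range (q - 1), (1 : ℝ) / (k + 1) := by
  have hq0 : q ≠ 0 := Nat.one_le_iff_ne_zero.1 hq
  have hlog : ∀ t ∈ uIoc (0 : ℝ) 1,
      log (t ^ (-1 / (q : ℝ)) - 1) = log (1 - t ^ (q : ℝ)⁻¹) - (q : ℝ)⁻¹ * log t :=
    fun t ht => by
      rw [uIoc_of_le zero_le_one] at ht
      rw [neg_div, one_div, log_rpow_neg_sub_one ht.1]
  rw [intervalIntegral.integral_congr_ae (ae_of_all _ hlog),
    intervalIntegral.integral_sub (intervalIntegrable_log_one_sub_rpow_inv hq0)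
      (intervalIntegral.intervalIntegrable_log'.const_mul _),
    intervalIntegral.integral_const_mul, integral_log_one_sub_rpow_inv hq0, integral_log]
  obtain ⟨m, rfl⟩ := Nat.exists_eq_add_of_le' hq
  simp [Finset.sum_range_succ]
end

section
/- Let m ≥ 1 be a real number, q > 1, and x0 > 0. Then the mean of the Stoppa distribution, ∫_{x0}^∞ x · m·q·x0^q·x^(-q-1)·(1 - (x/x0)^(-q))^(m-1) dx, equals x0·m·B(1 - 1/q, m), where B(a,b) = Γ(a)Γ(b)/Γ(a+b). -/
/-! The substitution `u = (x / x0) ^ (-q)` maps `(x0, ∞)` onto `(0, 1)`; the density times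
`dx` becomes `m (1 - u) ^ (m - 1) du` and the factor `x` becomes `x0 u ^ (-1/q)`, so the mean is
`x0 m` times the Beta integral with parameters `1 - 1/q` and `m`. -/

open MeasureTheory Real

open Set

theorem betaFn_eq_integral {a b : ℝ} (ha : 0 < a) (hb : 0 < b) :
    betaFn a b = ∫ x in (0 : ℝ)..1, x ^ (a - 1) * (1 - x) ^ (b - 1) := by
  have hcomplex : Complex.betaIntegral a b
      = ((∫ x in (0 : ℝ)..1, x ^ (a - 1) * (1 - x) ^ (b - 1) : ℝ) : ℂ) := by
    rw [Complex.betaIntegral, ← intervalIntegral.integral_ofReal]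
    refine intervalIntegral.integral_congr fun x hx => ?_
    rw [uIcc_of_le zero_le_one] at hx
    push_cast
    rw [Complex.ofReal_cpow hx.1, Complex.ofReal_cpow (sub_nonneg.2 hx.2)]
    push_cast
    ring
  rw [show betaFn a b = ProbabilityTheory.beta a b from rfl,
    ProbabilityTheory.beta_eq_betaIntegralReal a b ha hb, hcomplex, Complex.ofReal_re]

theorem image_mul_rpow_neg_Ioo_zero_one {c p : ℝ} (hc : 0 < c) (hp : 0 < p) :
    (fun u => c * u ^ (-p)) '' Ioo 0 1 = Ioi c := by
  ext y
  constructor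
  · rintro ⟨u, ⟨hu0, hu1⟩, rfl⟩
    exact lt_mul_of_one_lt_right hc
      (one_lt_rpow_of_pos_of_lt_one_of_neg hu0 hu1 (neg_neg_of_pos hp))
  · intro hy
    have hyc : 1 < y / c := (one_lt_div hc).2 hy
    refine ⟨(y / c) ^ (-p)⁻¹,
      ⟨by positivity, rpow_lt_one_of_one_lt_of_neg hyc (inv_lt_zero.2 (neg_neg_of_pos hp))⟩, ?_⟩
    beta_reduce
    rw [rpow_inv_rpow (by positivity) (neg_ne_zero.2 hp.ne'), mul_div_cancel₀ _ hc.ne']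

theorem integral_Ioi_eq_integral_Ioo_mul_rpow_neg {E : Type*} [NormedAddCommGroup E]
    [NormedSpace ℝ E] {c p : ℝ} (hc : 0 < c) (hp : 0 < p) (f : ℝ → E) :
    ∫ x in Ioi c, f x = ∫ u in Ioo 0 1, (p * c * u ^ (-p - 1)) • f (c * u ^ (-p)) := by
  have hderiv : ∀ u ∈ Ioo (0 : ℝ) 1, HasDerivWithinAt (fun u => c * u ^ (-p))
      (c * (-p * u ^ (-p - 1))) (Ioo 0 1) u := fun u hu =>
    ((hasDerivAt_rpow_const (Or.inl hu.1.ne')).const_mul c).hasDerivWithinAt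
  have hinj : InjOn (fun u => c * u ^ (-p)) (Ioo 0 1) := fun u hu v hv huv =>
    rpow_left_injOn (neg_ne_zero.2 hp.ne') hu.1.le hv.1.le (mul_left_cancel₀ hc.ne' huv)
  rw [← image_mul_rpow_neg_Ioo_zero_one hc hp,
    integral_image_eq_integral_abs_deriv_smul measurableSet_Ioo hderiv hinj]
  refine setIntegral_congr_fun measurableSet_Ioo fun u hu => ?_
  have hpos : 0 < u ^ (-p - 1) := rpow_pos_of_pos hu.1 _
  rw [abs_mul, abs_mul, abs_neg, abs_of_pos hc, abs_of_pos hp, abs_of_pos hpos,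
    mul_left_comm, mul_assoc]

theorem mul_stoppa_density {m q x0 x : ℝ} (hx0 : 0 < x0) (hx : 0 < x) (g : ℝ) :
    x * (m * q * x0 ^ q * x ^ (-q - 1) * g) = m * q * (x / x0) ^ (-q) * g := by
  rw [rpow_sub_one hx.ne', div_rpow hx.le hx0.le, rpow_neg hx0.le]
  field_simp

/-- The mean of the Stoppa distribution. -/
theorem stoppa_mean (m q x0 : ℝ) (hm : 1 ≤ m) (hq : 1 < q) (hx0 : 0 < x0) :
    ∫ x in Set.Ioi x0,
        x * (m * q * x0 ^ q * x ^ (-q - 1) * (1 - (x / x0) ^ (-q)) ^ (m - 1)) =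
      x0 * m * betaFn (1 - 1 / q) m := by
  have hq0 : 0 < q := by linarith
  have hpointwise : ∀ u ∈ Ioo (0 : ℝ) 1,
      (q⁻¹ * x0 * u ^ (-q⁻¹ - 1)) • (x0 * u ^ (-q⁻¹) * (m * q * x0 ^ q
        * (x0 * u ^ (-q⁻¹)) ^ (-q - 1) * (1 - (x0 * u ^ (-q⁻¹) / x0) ^ (-q)) ^ (m - 1)))
      = x0 * m * (u ^ (1 - 1 / q - 1) * (1 - u) ^ (m - 1)) := by
    rintro u ⟨hu0, -⟩
    have hsubst : (x0 * u ^ (-q⁻¹) / x0) ^ (-q) = u := by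
      rw [mul_div_cancel_left₀ _ hx0.ne', ← rpow_mul hu0.le, neg_mul_neg,
        inv_mul_cancel₀ hq0.ne', rpow_one]
    rw [mul_stoppa_density hx0 (by positivity), hsubst, smul_eq_mul, rpow_sub_one hu0.ne',
      show (1 - 1 / q - 1 : ℝ) = -q⁻¹ by ring]
    field_simp
  rw [integral_Ioi_eq_integral_Ioo_mul_rpow_neg hx0 (inv_pos.2 hq0),
    setIntegral_congr_fun measurableSet_Ioo hpointwise, integral_const_mul,
    ← integral_Ioc_eq_integral_Ioo, ← intervalIntegral.integral_of_le zero_le_one,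
    ← betaFn_eq_integral (by rw [sub_pos, div_lt_one hq0]; exact hq) (by linarith)]
end
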